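/- arXiv:2012.09219 — 5 statements merged into one kernel-verified Lean document; each statement's English description precedes it below -/
import Mathlib

section
/- If probability measures μₙ on ℝ converge weakly to μ = f·λ with f a continuous probability density, then sup over all intervals I ⊆ ℝ of |μₙ(I) − μ(I)| tends to 0 as n → ∞. -/
/-!
Weak convergence to a limit without atoms gives pointwise convergence of the distribution
functions (portmanteau: the frontier of `Iic x` is a null point), and since the limit
distribution function is continuous, the convergence is uniform (Pólya): locally uniform by
monotonicity, uniform on compacts, and the tails are squeezed between `0` and `1`.
An order-connected set `I` is the difference of the lower sets `lowerClosure I` and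
`lowerClosure I \ upperClosure I`, and a nonempty proper lower set of `ℝ` lies between `Iio a`
and `Iic a` for `a` its supremum; on such sets the two measures differ by at most
`sup |Fₙ - F|`, so `|μₙ I - μ I| ≤ 2 sup |Fₙ - F|`.
-/

open MeasureTheory Filter Topology Set ProbabilityTheory

section Density

variable {α : Type*} [MeasurableSpace α] {ρ : Measure α} {f : α → ℝ}

lemma measureReal_withDensity_ofReal (hf_nonneg : ∀ x, 0 ≤ f x) (hf_int : Integrable f ρ)
    {s : Set α} (hs : MeasurableSet s) :
    (ρ.withDensity fun x => ENNReal.ofReal (f x)).real s = ∫ x in s, f x ∂ρ := by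
  rw [measureReal_def, withDensity_apply _ hs, ← ofReal_integral_eq_lintegral_ofReal
    hf_int.integrableOn (ae_of_all _ hf_nonneg), ENNReal.toReal_ofReal
    (setIntegral_nonneg hs fun x _ => hf_nonneg x)]

lemma isProbabilityMeasure_withDensity_ofReal (hf_nonneg : ∀ x, 0 ≤ f x)
    (hf_int : Integrable f ρ) (hf_one : ∫ x, f x ∂ρ = 1) :
    IsProbabilityMeasure (ρ.withDensity fun x => ENNReal.ofReal (f x)) := by
  refine ⟨?_⟩
  rw [withDensity_apply _ MeasurableSet.univ, Measure.restrict_univ,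
    ← ofReal_integral_eq_lintegral_ofReal hf_int (ae_of_all _ hf_nonneg), hf_one,
    ENNReal.ofReal_one]

lemma integral_withDensity_ofReal (hf_nonneg : ∀ x, 0 ≤ f x) (hf_meas : AEMeasurable f ρ)
    (g : α → ℝ) :
    ∫ x, g x ∂ρ.withDensity (fun x => ENNReal.ofReal (f x)) = ∫ x, g x * f x ∂ρ := by
  rw [integral_withDensity_eq_integral_toReal_smul₀ hf_meas.ennreal_ofReal
    (ae_of_all _ fun _ => ENNReal.ofReal_lt_top)]
  simp_rw [ENNReal.toReal_ofReal (hf_nonneg _), smul_eq_mul, mul_comm]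

end Density

section CDF

variable {μ : Measure ℝ} [IsProbabilityMeasure μ]

lemma continuous_cdf_of_nullSingletonClass [NullSingletonClass μ] : Continuous (cdf μ) := by
  refine continuous_iff_continuousAt.2 fun x =>
    continuousAt_iff_continuous_left_right.2 ⟨?_, (cdf μ).right_continuous x⟩
  have h := (cdf μ).measure_singleton x
  rw [measure_cdf, measure_singleton, eq_comm, ENNReal.ofReal_eq_zero, sub_nonpos] at h
  exact continuousWithinAt_Iio_iff_Iic.1 <|
    (monotone_cdf μ).continuousWithinAt_Iio_iff_leftLim_eq.2 <|
      le_antisymm ((monotone_cdf μ).leftLim_le le_rfl) h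

lemma tendsto_cdf_of_tendsto {ι : Type*} {L : Filter ι} {μs : ι → ProbabilityMeasure ℝ}
    {μ : ProbabilityMeasure ℝ} (h : Tendsto μs L (𝓝 μ)) {x : ℝ}
    (hx : (μ : Measure ℝ) {x} = 0) :
    Tendsto (fun i => cdf (μs i) x) L (𝓝 (cdf μ x)) := by
  simp only [cdf_eq_real, measureReal_def]
  refine (ENNReal.tendsto_toReal (measure_ne_top _ _)).comp <|
    ProbabilityMeasure.tendsto_measure_of_null_frontier_of_tendsto' h ?_
  rwa [frontier_Iic]

end CDF

lemma abs_sub_le_of_monotone_of_mem_Icc {F g : ℝ → ℝ} (hF : Monotone F) (hg : Monotone g)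
    {x y z : ℝ} (hx : x ∈ Icc y z) :
    |g x - F x| ≤ max |g y - F y| |g z - F z| + (F z - F y) := by
  have hy := abs_le.1 (le_max_left |g y - F y| |g z - F z|)
  have hz := abs_le.1 (le_max_right |g y - F y| |g z - F z|)
  rw [abs_le]
  constructor <;> linarith [hF hx.1, hF hx.2, hg hx.1, hg hx.2]

section Polya

variable {ι : Type*} {L : Filter ι} {μs : ι → Measure ℝ} {μ : Measure ℝ} {ε : ℝ}

lemma exists_mem_nhds_eventually_dist_cdf_lt
    (hlim : ∀ x, Tendsto (fun i => cdf (μs i) x) L (𝓝 (cdf μ x))) {x₀ : ℝ}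
    (hx₀ : ContinuousAt (cdf μ) x₀) (hε : 0 < ε) :
    ∃ t ∈ 𝓝 x₀, ∀ᶠ i in L, ∀ x ∈ t, dist (cdf μ x) (cdf (μs i) x) < ε := by
  obtain ⟨y, z, hx₀yz, hyz, hsub⟩ := exists_Icc_mem_subset_of_mem_nhds <|
    hx₀.preimage_mem_nhds (Metric.ball_mem_nhds (cdf μ x₀) (by positivity : 0 < ε / 4))
  have hy : dist (cdf μ y) (cdf μ x₀) < ε / 4 := hsub ⟨le_rfl, hx₀yz.1.trans hx₀yz.2⟩
  have hz : dist (cdf μ z) (cdf μ x₀) < ε / 4 := hsub ⟨hx₀yz.1.trans hx₀yz.2, le_rfl⟩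
  refine ⟨Icc y z, hyz, ?_⟩
  filter_upwards [Metric.tendsto_nhds.1 (hlim y) (ε / 4) (by positivity),
    Metric.tendsto_nhds.1 (hlim z) (ε / 4) (by positivity)] with i hiy hiz x hx
  rw [Real.dist_eq] at hy hz hiy hiz ⊢
  rw [abs_sub_comm]
  have hsandwich := abs_sub_le_of_monotone_of_mem_Icc (monotone_cdf μ) (monotone_cdf (μs i)) hx
  have hends := max_lt hiy hiz
  linarith [abs_lt.1 hy, abs_lt.1 hz]

lemma exists_eventually_dist_cdf_lt_of_le
    (hlim : ∀ x, Tendsto (fun i => cdf (μs i) x) L (𝓝 (cdf μ x))) (hε : 0 < ε) :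
    ∃ a, ∀ᶠ i in L, ∀ x ≤ a, dist (cdf μ x) (cdf (μs i) x) < ε := by
  obtain ⟨a, ha⟩ := ((tendsto_cdf_atBot μ).eventually_lt_const hε).exists
  refine ⟨a, ?_⟩
  filter_upwards [(hlim a).eventually_lt_const ha] with i hi x hx
  exact abs_sub_lt_of_nonneg_of_lt (cdf_nonneg μ x) ((monotone_cdf μ hx).trans_lt ha)
    (cdf_nonneg _ x) ((monotone_cdf _ hx).trans_lt hi)

lemma exists_eventually_dist_cdf_lt_of_ge
    (hlim : ∀ x, Tendsto (fun i => cdf (μs i) x) L (𝓝 (cdf μ x))) (hε : 0 < ε) :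
    ∃ b, ∀ᶠ i in L, ∀ x ≥ b, dist (cdf μ x) (cdf (μs i) x) < ε := by
  obtain ⟨b, hb⟩ := ((tendsto_cdf_atTop μ).eventually_const_lt (sub_lt_self 1 hε)).exists
  refine ⟨b, ?_⟩
  filter_upwards [(hlim b).eventually_const_lt hb] with i hi x hx
  rw [Real.dist_eq, abs_sub_lt_iff]
  constructor <;> linarith [cdf_le_one μ x, cdf_le_one (μs i) x, monotone_cdf μ hx,
    monotone_cdf (μs i) hx]

/-- Pólya's theorem. -/
theorem tendstoUniformly_cdf_of_tendsto (hμ : Continuous (cdf μ))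
    (hlim : ∀ x, Tendsto (fun i => cdf (μs i) x) L (𝓝 (cdf μ x))) :
    TendstoUniformly (fun i => cdf (μs i)) (cdf μ) L := by
  refine Metric.tendstoUniformly_iff.2 fun ε hε => ?_
  obtain ⟨a, ha⟩ := exists_eventually_dist_cdf_lt_of_le hlim hε
  obtain ⟨b, hb⟩ := exists_eventually_dist_cdf_lt_of_ge hlim hε
  have hloc : TendstoLocallyUniformly (fun i => cdf (μs i)) (cdf μ) L :=
    Metric.tendstoLocallyUniformly_iff.2 fun ε hε x =>
      exists_mem_nhds_eventually_dist_cdf_lt hlim hμ.continuousAt hε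
  have hab := Metric.tendstoUniformlyOn_iff.1
    ((tendstoLocallyUniformlyOn_iff_tendstoUniformlyOn_of_compact isCompact_Icc).1
      (hloc.tendstoLocallyUniformlyOn (s := Icc a b))) ε hε
  filter_upwards [ha, hb, hab] with i hai hbi habi x
  rcases le_total x a with hxa | hax
  · exact hai x hxa
  rcases le_total b x with hbx | hxb
  · exact hbi x hbx
  · exact habi x ⟨hax, hxb⟩

end Polya

section Intervals

variable {μ ν : Measure ℝ} [IsProbabilityMeasure μ] [NullSingletonClass μ]
  [IsProbabilityMeasure ν] {δ : ℝ}

lemma cdf_sub_le_measureReal_Iio (h : ∀ x, |cdf ν x - cdf μ x| ≤ δ) (a : ℝ) :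
    cdf μ a - δ ≤ ν.real (Iio a) := by
  have hμ : Tendsto (fun y => cdf μ y - δ) (𝓝[<] a) (𝓝 (cdf μ a - δ)) :=
    ((continuous_cdf_of_nullSingletonClass.tendsto a).mono_left nhdsWithin_le_nhds).sub_const δ
  refine le_of_tendsto hμ (eventually_nhdsWithin_of_forall fun y hy => ?_)
  calc cdf μ y - δ ≤ cdf ν y := by linarith [(abs_le.1 (h y)).1]
    _ = ν.real (Iic y) := cdf_eq_real ν y
    _ ≤ ν.real (Iio a) := measureReal_mono (Iic_subset_Iio.2 hy)

lemma abs_measureReal_sub_le_of_Iio_subset_of_subset_Iic (h : ∀ x, |cdf ν x - cdf μ x| ≤ δ)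
    {s : Set ℝ} {a : ℝ} (hIio : Iio a ⊆ s) (hIic : s ⊆ Iic a) :
    |ν.real s - μ.real s| ≤ δ := by
  have hμs : μ.real s = cdf μ a := by
    rw [cdf_eq_real]
    refine le_antisymm (measureReal_mono hIic) ?_
    rw [← measureReal_congr Iio_ae_eq_Iic]
    exact measureReal_mono hIio
  have hup : ν.real s ≤ cdf ν a := (measureReal_mono hIic).trans_eq (cdf_eq_real ν a).symm
  have hlow := (cdf_sub_le_measureReal_Iio h a).trans (measureReal_mono hIio)
  rw [hμs, abs_le]
  constructor <;> linarith [(abs_le.1 (h a)).2]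

lemma abs_measureReal_sub_le_of_isLowerSet (h : ∀ x, |cdf ν x - cdf μ x| ≤ δ) {s : Set ℝ}
    (hs : IsLowerSet s) : |ν.real s - μ.real s| ≤ δ := by
  have hδ : 0 ≤ δ := (abs_nonneg _).trans (h 0)
  rcases s.eq_empty_or_nonempty with rfl | hne
  · simpa using hδ
  by_cases hbdd : BddAbove s
  · refine abs_measureReal_sub_le_of_Iio_subset_of_subset_Iic h (a := sSup s) (fun x hx => ?_)
      fun x hx => le_csSup hbdd hx
    obtain ⟨y, hy, hxy⟩ := exists_lt_of_lt_csSup hne hx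
    exact hs hxy.le hy
  · have : s = univ := eq_univ_of_forall fun x =>
      let ⟨y, hy, hxy⟩ := not_bddAbove_iff.1 hbdd x; hs hxy.le hy
    simpa [this] using hδ

lemma abs_measureReal_sub_le_of_ordConnected (h : ∀ x, |cdf ν x - cdf μ x| ≤ δ) {s : Set ℝ}
    (hs : s.OrdConnected) : |ν.real s - μ.real s| ≤ 2 * δ := by
  set U : Set ℝ := ↑(upperClosure s)
  set D : Set ℝ := ↑(lowerClosure s)
  have hU : MeasurableSet U := (UpperSet.upper _).ordConnected.measurableSet
  have hD : IsLowerSet D := LowerSet.lower _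
  have hDU : IsLowerSet (D \ U) := hD.inter (UpperSet.upper _).compl
  have hs_eq (ρ : Measure ℝ) [IsFiniteMeasure ρ] : ρ.real s = ρ.real D - ρ.real (D \ U) := by
    rw [eq_sub_iff_add_eq', ← measureReal_sdiff_add_inter (s := D) hU, inter_comm,
      hs.upperClosure_inter_lowerClosure]
  rw [hs_eq ν, hs_eq μ, two_mul]
  calc |ν.real D - ν.real (D \ U) - (μ.real D - μ.real (D \ U))|
      = |(ν.real D - μ.real D) - (ν.real (D \ U) - μ.real (D \ U))| := by ring_nf
    _ ≤ δ + δ := (abs_sub _ _).trans (add_le_add (abs_measureReal_sub_le_of_isLowerSet h hD)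
      (abs_measureReal_sub_le_of_isLowerSet h hDU))

end Intervals

theorem stmt_1_general (f : ℝ → ℝ) (hf_nonneg : ∀ x, 0 ≤ f x)
    (hf_int : Integrable f) (hf_one : ∫ x, f x = 1)
    (μn : ℕ → Measure ℝ) [∀ n, IsProbabilityMeasure (μn n)]
    (hweak : ∀ g : BoundedContinuousFunction ℝ ℝ,
      Tendsto (fun n => ∫ x, g x ∂(μn n)) atTop (𝓝 (∫ x, g x * f x))) :
    ∀ ε > 0, ∃ N : ℕ, ∀ n ≥ N, ∀ I : Set ℝ, I.OrdConnected → MeasurableSet I →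
      volume I ≠ 0 → |((μn n) I).toReal - ∫ x in I, f x| < ε := by
  intro ε hε
  set μ := volume.withDensity fun x => ENNReal.ofReal (f x)
  have hμ := isProbabilityMeasure_withDensity_ofReal hf_nonneg hf_int hf_one
  have hconv : Tendsto (β := ProbabilityMeasure ℝ) (fun n => ⟨μn n, inferInstance⟩) atTop
      (𝓝 ⟨μ, hμ⟩) :=
    ProbabilityMeasure.tendsto_iff_forall_integral_tendsto.2 fun g => by
      simpa only [μ, ProbabilityMeasure.coe_mk,
        integral_withDensity_ofReal hf_nonneg hf_int.aemeasurable] using hweak g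
  have hcdf (x : ℝ) : Tendsto (fun n => cdf (μn n) x) atTop (𝓝 (cdf μ x)) :=
    tendsto_cdf_of_tendsto hconv (measure_singleton (μ := μ) x)
  have hunif := tendstoUniformly_cdf_of_tendsto continuous_cdf_of_nullSingletonClass hcdf
  obtain ⟨N, hN⟩ :=
    eventually_atTop.1 <| Metric.tendstoUniformly_iff.1 hunif (ε / 3) (by positivity)
  refine ⟨N, fun n hn I hI hImeas _ => ?_⟩
  rw [← measureReal_withDensity_ofReal hf_nonneg hf_int hImeas]
  calc |(μn n).real I - μ.real I| ≤ 2 * (ε / 3) :=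
        abs_measureReal_sub_le_of_ordConnected
          (fun x => by simpa only [Real.dist_eq, abs_sub_comm] using (hN n hn x).le) hI
    _ < ε := by linarith

/-- If probability measures `μn` on `ℝ` converge weakly to `μ = f·λ` with `f` a continuous
probability density, then the supremum over all intervals `I ⊆ ℝ` of positive length of
`|μn(I) − μ(I)|` tends to `0` as `n → ∞`. -/
theorem stmt_1 (f : ℝ → ℝ) (hf_cont : Continuous f) (hf_nonneg : ∀ x, 0 ≤ f x)
    (hf_int : Integrable f) (hf_one : ∫ x, f x = 1)
    (μn : ℕ → Measure ℝ) [∀ n, IsProbabilityMeasure (μn n)]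
    (hweak : ∀ g : BoundedContinuousFunction ℝ ℝ,
      Tendsto (fun n => ∫ x, g x ∂(μn n)) atTop (𝓝 (∫ x, g x * f x))) :
    ∀ ε > 0, ∃ N : ℕ, ∀ n ≥ N, ∀ I : Set ℝ, I.OrdConnected → MeasurableSet I →
      volume I ≠ 0 → |((μn n) I).toReal - ∫ x in I, f x| < ε :=
  stmt_1_general f hf_nonneg hf_int hf_one μn hweak
end

section
/- Let μₙ be probability measures supported on the lattice Gₙ = vₙ + wₙℤ ⊆ ℝ with widths wₙ > 0, and suppose the local limit theorem sup_{x ∈ Gₙ} |μₙ({x})/wₙ − f(x)| → 0 holds, where f is a continuous probability density. Let [a,b] be a compact interval on which f ≥ c > 0. Then the histogram densities hₙ(x) = Σ_{y ∈ Gₙ} (μₙ({y})/wₙ)·1_{(y−wₙ/2, y+wₙ/2]}(x) satisfy sup_{x ∈ [a,b]} |hₙ(x)/f(x) − 1| → 0, provided wₙ → 0. -/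
/-!
The cells `(y - wₙ/2, y + wₙ/2]`, `y ∈ Gₙ`, partition `ℝ`, so `hₙ(x) = μₙ({y})/wₙ` for the lattice
point `y` nearest to `x`, and `|y - x| ≤ wₙ/2`. The local limit theorem makes `μₙ({y})/wₙ` close to
`f(y)`, and uniform continuity of `f` near `[a,b]` makes `f(y)` close to `f(x)`; hence `hₙ → f`
uniformly on `[a,b]`, and dividing by `f ≥ c > 0` turns this into relative uniform convergence.
-/

open MeasureTheory Filter Topology

section LatticeCells

variable {v w : ℝ}

/-- The index `k` of the cell `(v + w k - w/2, v + w k + w/2]` of the lattice `v + wℤ` containing `x`. -/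
noncomputable def latticeCellIndex (v w x : ℝ) : ℤ := ⌈(x - v) / w - 1 / 2⌉

lemma mem_Ioc_cell_iff (hw : 0 < w) (x : ℝ) (k : ℤ) :
    x ∈ Set.Ioc (v + w * k - w / 2) (v + w * k + w / 2) ↔ k = latticeCellIndex v w x := by
  rw [latticeCellIndex, eq_comm, Int.ceil_eq_iff, lt_sub_iff_add_lt, sub_le_iff_le_add,
    lt_div_iff₀ hw, div_le_iff₀ hw, Set.mem_Ioc]
  constructor <;> rintro ⟨h₁, h₂⟩ <;> constructor <;> linarith

lemma tsum_mul_indicator_cell (hw : 0 < w) (g : ℤ → ℝ) (x : ℝ) :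
    ∑' k : ℤ, g k * Set.indicator (Set.Ioc (v + w * k - w / 2) (v + w * k + w / 2)) 1 x =
      g (latticeCellIndex v w x) := by
  rw [tsum_eq_single (latticeCellIndex v w x)]
  · rw [Set.indicator_of_mem ((mem_Ioc_cell_iff hw x _).2 rfl), Pi.one_apply, mul_one]
  · intro k hk
    rw [Set.indicator_of_notMem (fun hx => hk ((mem_Ioc_cell_iff hw x k).1 hx)), mul_zero]

lemma abs_cell_center_sub_le (hw : 0 < w) (x : ℝ) :
    |v + w * latticeCellIndex v w x - x| ≤ w / 2 := by
  have hx := (mem_Ioc_cell_iff (v := v) hw x _).2 rfl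
  rw [abs_le]
  constructor <;> linarith [hx.1, hx.2]

end LatticeCells

lemma tendstoUniformlyOn_cellStep_of_localLimit {f : ℝ → ℝ} (hf : Continuous f) {K : Set ℝ} (hK : IsCompact K)
    {v w : ℕ → ℝ} (hw : ∀ n, 0 < w n) (hw0 : Tendsto w atTop (𝓝 0)) (p : ℕ → ℤ → ℝ)
    (hp : ∀ ε > 0, ∃ N : ℕ, ∀ n ≥ N, ∀ k : ℤ, |p n k - f (v n + w n * k)| < ε) :
    TendstoUniformlyOn (fun n x => p n (latticeCellIndex (v n) (w n) x)) f atTop K := by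
  rw [Metric.tendstoUniformlyOn_iff]
  intro ε hε
  obtain ⟨δ, hδ, hfδ⟩ := Metric.uniformContinuousOn_iff.1
    ((hK.cthickening (r := 1)).uniformContinuousOn_of_continuous hf.continuousOn) (ε / 2)
    (half_pos hε)
  obtain ⟨N, hN⟩ := hp (ε / 2) (half_pos hε)
  filter_upwards [eventually_ge_atTop N, hw0.eventually (gt_mem_nhds (lt_min hδ one_pos))]
    with n hnN hwn x hx
  set y := v n + w n * latticeCellIndex (v n) (w n) x
  have hyx : dist y x ≤ w n / 2 := abs_cell_center_sub_le (hw n) x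
  have hwδ : w n < δ := hwn.trans_le (min_le_left _ _)
  have hw1 : w n < 1 := hwn.trans_le (min_le_right _ _)
  have hfyx : dist (f x) (f y) < ε / 2 :=
    hfδ x (Metric.self_subset_cthickening K hx) y
      (Metric.mem_cthickening_of_dist_le y x 1 K hx (by linarith)) (by rw [dist_comm]; linarith)
  calc dist (f x) (p n (latticeCellIndex (v n) (w n) x))
      ≤ dist (f x) (f y) + dist (f y) (p n (latticeCellIndex (v n) (w n) x)) := dist_triangle _ _ _
    _ < ε / 2 + ε / 2 := by
        gcongr
        rw [dist_comm]
        exact hN n hnN _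
    _ = ε := add_halves ε

lemma TendstoUniformlyOn.div_of_le {ι : Type*} {l : Filter ι} {F : ι → ℝ → ℝ} {f : ℝ → ℝ}
    {K : Set ℝ} {c : ℝ} (hF : TendstoUniformlyOn F f l K) (hc : 0 < c) (hfc : ∀ x ∈ K, c ≤ f x) :
    TendstoUniformlyOn (fun n x => F n x / f x) 1 l K := by
  rw [Metric.tendstoUniformlyOn_iff] at hF ⊢
  intro ε hε
  filter_upwards [hF (ε * c) (by positivity)] with n hn x hx
  have hfx : 0 < f x := hc.trans_le (hfc x hx)
  calc dist 1 (F n x / f x) = dist (f x) (F n x) / f x := by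
        rw [Real.dist_eq, Real.dist_eq, ← abs_of_pos hfx, ← abs_div, abs_of_pos hfx]
        congr 1
        field_simp
    _ ≤ dist (f x) (F n x) / c := by gcongr; exact hfc x hx
    _ < ε := (div_lt_iff₀ hc).2 (hn x hx)

theorem stmt_2_general (v w : ℕ → ℝ) (hw : ∀ n, 0 < w n) (hw0 : Tendsto w atTop (𝓝 0))
    (μn : ℕ → Measure ℝ)
    (f : ℝ → ℝ) (hf_cont : Continuous f)
    (a b c : ℝ) (hc : 0 < c) (hfc : ∀ x ∈ Set.Icc a b, c ≤ f x)
    (hLLT : ∀ ε > 0, ∃ N : ℕ, ∀ n ≥ N, ∀ k : ℤ,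
      |((μn n) {v n + w n * (k : ℝ)}).toReal / w n - f (v n + w n * (k : ℝ))| < ε)
    (h : ℕ → ℝ → ℝ)
    (hh : ∀ n x, h n x = ∑' k : ℤ, ((μn n) {v n + w n * (k : ℝ)}).toReal / w n *
        Set.indicator (Set.Ioc (v n + w n * (k : ℝ) - w n / 2)
          (v n + w n * (k : ℝ) + w n / 2)) 1 x) :
    ∀ ε > 0, ∃ N : ℕ, ∀ n ≥ N, ∀ x ∈ Set.Icc a b, |h n x / f x - 1| < ε := by
  have hh_cell : h = fun n x => ((μn n) {v n + w n * (latticeCellIndex (v n) (w n) x : ℝ)}).toReal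
      / w n := by
    ext n x
    rw [hh, tsum_mul_indicator_cell (hw n) (fun k => ((μn n) {v n + w n * (k : ℝ)}).toReal / w n)]
  have hconv : TendstoUniformlyOn (fun n x => h n x / f x) 1 atTop (Set.Icc a b) := by
    rw [hh_cell]
    exact (tendstoUniformlyOn_cellStep_of_localLimit hf_cont isCompact_Icc hw hw0 _ hLLT).div_of_le hc hfc
  intro ε hε
  obtain ⟨N, hN⟩ := eventually_atTop.1 (Metric.tendstoUniformlyOn_iff.1 hconv ε hε)
  exact ⟨N, fun n hn x hx => by simpa [Real.dist_eq, abs_sub_comm] using hN n hn x hx⟩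

/-- Given a local limit theorem on the lattices `Gₙ = vₙ + wₙℤ`, the histogram densities
`hₙ` of `μₙ` converge relatively uniformly to `f` on a compact interval `[a,b]` on which
`f ≥ c > 0`. -/
theorem stmt_2 (v w : ℕ → ℝ) (hw : ∀ n, 0 < w n) (hw0 : Tendsto w atTop (𝓝 0))
    (μn : ℕ → Measure ℝ) [∀ n, IsProbabilityMeasure (μn n)]
    (hsupp : ∀ n, (μn n) {x : ℝ | ∃ k : ℤ, x = v n + w n * k}ᶜ = 0)
    (f : ℝ → ℝ) (hf_cont : Continuous f) (hf_nonneg : ∀ x, 0 ≤ f x)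
    (hf_int : Integrable f) (hf_one : ∫ x, f x = 1)
    (a b c : ℝ) (hab : a < b) (hc : 0 < c) (hfc : ∀ x ∈ Set.Icc a b, c ≤ f x)
    (hLLT : ∀ ε > 0, ∃ N : ℕ, ∀ n ≥ N, ∀ k : ℤ,
      |((μn n) {v n + w n * (k : ℝ)}).toReal / w n - f (v n + w n * (k : ℝ))| < ε)
    (h : ℕ → ℝ → ℝ)
    (hh : ∀ n x, h n x = ∑' k : ℤ, ((μn n) {v n + w n * (k : ℝ)}).toReal / w n *
        Set.indicator (Set.Ioc (v n + w n * (k : ℝ) - w n / 2)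
          (v n + w n * (k : ℝ) + w n / 2)) 1 x) :
    ∀ ε > 0, ∃ N : ℕ, ∀ n ≥ N, ∀ x ∈ Set.Icc a b, |h n x / f x - 1| < ε :=
  stmt_2_general v w hw hw0 μn f hf_cont a b c hc hfc hLLT h hh
end

section
/- (Univariate interval type local limit theorem.) Let μₙ be probability measures on lattices Gₙ = vₙ + wₙℤ with wₙ > 0 and wₙ → 0, satisfying the local limit theorem sup_{x∈Gₙ} |μₙ({x})/wₙ − f(x)| → 0 for a continuous probability density f, and let [a,b] be a compact interval on which f ≥ c > 0. If (mₙ) is a sequence of positive reals with mₙ/wₙ → ∞, then sup over all intervals I ⊆ [a,b] with |I| ≥ mₙ of |μₙ(I)/μ(I) − 1| → 0, where μ = f·λ. -/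
/-!
Write `I` as an interval with endpoints `α < β` and let `W = wₙ`. The lattice points
`V + W k`, `⌈(α - V)/W⌉ ≤ k ≤ ⌊(β - V)/W⌋`, cut `[α, β]` into cells of length `W` plus two
edge pieces shorter than `W`. The local limit theorem compares `μₙ{x}` with `W f(x)` at each
lattice point, uniform continuity compares `W f(x)` with the integral of `f` over the cell
starting at `x`, and each edge costs at most `W sup f`. Summing over the `≤ |I|/W` cells gives
`|μₙ(I) - μ(I)| ≤ 3 |I| ε + 3 W sup f`, while `μ(I) ≥ c |I|` and `W / |I| ≤ wₙ / mₙ → 0`.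
-/

open MeasureTheory Filter Topology Set

lemma Set.OrdConnected.exists_Ioo_subset_subset_Icc {X : Type*} [ConditionallyCompleteLinearOrder X]
    {I : Set X} (hI : I.OrdConnected) (hne : I.Nonempty) {a b : X} (hIab : I ⊆ Icc a b) :
    ∃ α β, a ≤ α ∧ β ≤ b ∧ Ioo α β ⊆ I ∧ I ⊆ Icc α β := by
  have hbdd : BddBelow I := ⟨a, fun x hx => (hIab hx).1⟩
  have hbdd' : BddAbove I := ⟨b, fun x hx => (hIab hx).2⟩
  refine ⟨sInf I, sSup I, le_csInf hne fun x hx => (hIab hx).1,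
    csSup_le hne fun x hx => (hIab hx).2, fun z hz => ?_, subset_Icc_csInf_csSup hbdd hbdd'⟩
  obtain ⟨x, hx, hxz⟩ := exists_lt_of_csInf_lt hne hz.1
  obtain ⟨y, hy, hzy⟩ := exists_lt_of_lt_csSup hne hz.2
  exact hI.out hx hy ⟨hxz.le, hzy.le⟩

lemma ae_eq_Ioc_of_Ioo_subset_of_subset_Icc {μ : Measure ℝ} [NullSingletonClass μ] {I : Set ℝ}
    {α β : ℝ} (hIoo : Ioo α β ⊆ I) (hIcc : I ⊆ Icc α β) : I =ᵐ[μ] Ioc α β :=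
  (hIcc.eventuallyLE.trans Ioc_ae_eq_Icc.symm.le).antisymm
    (Ioo_ae_eq_Ioc.symm.le.trans hIoo.eventuallyLE)

lemma abs_intervalIntegral_sub_mul_le {f : ℝ → ℝ} (hf : Continuous f) {x W ε : ℝ} (hW : 0 ≤ W)
    (hfx : ∀ y ∈ Icc x (x + W), |f y - f x| ≤ ε) :
    |(∫ y in x..x + W, f y) - W * f x| ≤ W * ε := by
  have hsub : (∫ y in x..x + W, f y) - W * f x = ∫ y in x..x + W, (f y - f x) := by
    rw [intervalIntegral.integral_sub (hf.intervalIntegrable _ _) intervalIntegrable_const]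
    simp
  rw [hsub]
  calc |∫ y in x..x + W, (f y - f x)| ≤ ε * |x + W - x| := by
        refine intervalIntegral.norm_integral_le_of_norm_le_const
          (f := fun y => f y - f x) fun y hy => ?_
        rw [uIoc_of_le (by linarith)] at hy
        exact hfx y (Ioc_subset_Icc_self hy)
    _ = W * ε := by rw [add_sub_cancel_left, abs_of_nonneg hW, mul_comm]

lemma intervalIntegral_mem_Icc_of_nonneg_of_le {f : ℝ → ℝ} (hf : Continuous f) {u v W M : ℝ}
    (huv : u ≤ v) (hvu : v - u ≤ W) (hf0 : ∀ x ∈ Icc u v, 0 ≤ f x)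
    (hfM : ∀ x ∈ Icc u v, f x ≤ M) : (∫ x in u..v, f x) ∈ Icc 0 (W * M) := by
  have hM : 0 ≤ M := (hf0 u ⟨le_rfl, huv⟩).trans (hfM u ⟨le_rfl, huv⟩)
  refine ⟨intervalIntegral.integral_nonneg huv hf0, ?_⟩
  calc (∫ x in u..v, f x) ≤ ∫ _ in u..v, M :=
        intervalIntegral.integral_mono_on huv (hf.intervalIntegrable _ _)
          intervalIntegrable_const hfM
    _ = (v - u) * M := by simp [mul_comm]
    _ ≤ W * M := by gcongr

lemma abs_sub_mul_le_of_abs_div_sub_le {p y W e : ℝ} (hW : 0 < W) (h : |p / W - y| ≤ e) :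
    |p - W * y| ≤ W * e := by
  have : p - W * y = W * (p / W - y) := by field_simp
  rw [this, abs_mul, abs_of_pos hW]
  exact mul_le_mul_of_nonneg_left h hW.le

lemma abs_div_sub_one_le {X J D c e : ℝ} (hcD : 0 < c * D) (hJ : c * D ≤ J) (hX : |X - J| ≤ e) :
    |X / J - 1| ≤ e / (c * D) := by
  have hJ0 : 0 < J := hcD.trans_le hJ
  rw [div_sub_one hJ0.ne', abs_div, abs_of_pos hJ0]
  exact div_le_div₀ ((abs_nonneg _).trans hX) hX hcD hJ

section Lattice

variable {V W : ℝ}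

lemma lattice_mem_Icc_iff (hW : 0 < W) {α β : ℝ} {k : ℤ} :
    V + W * k ∈ Icc α β ↔ k ∈ Finset.Icc ⌈(α - V) / W⌉ ⌊(β - V) / W⌋ := by
  rw [Finset.mem_Icc, Int.ceil_le, Int.le_floor, div_le_iff₀ hW, le_div_iff₀ hW, mem_Icc]
  constructor <;> rintro ⟨h₁, h₂⟩ <;> constructor <;> linarith

lemma lattice_ceil_mem_Ico (hW : 0 < W) (α : ℝ) :
    V + W * ⌈(α - V) / W⌉ ∈ Ico α (α + W) := by
  have h₁ := (div_le_iff₀ hW).mp (Int.le_ceil ((α - V) / W))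
  have h₂ := (lt_div_iff₀ hW).mp (by linarith [Int.ceil_lt_add_one ((α - V) / W)] :
    (⌈(α - V) / W⌉ : ℝ) - 1 < (α - V) / W)
  constructor <;> linarith

lemma lattice_floor_mem_Ioc (hW : 0 < W) (β : ℝ) :
    V + W * ⌊(β - V) / W⌋ ∈ Ioc (β - W) β := by
  have h₁ := (le_div_iff₀ hW).mp (Int.floor_le ((β - V) / W))
  have h₂ := (div_lt_iff₀ hW).mp (by linarith [Int.lt_floor_add_one ((β - V) / W)] :
    (β - V) / W < (⌊(β - V) / W⌋ : ℝ) + 1)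
  constructor <;> linarith

lemma measureReal_le_sum_lattice {μ : Measure ℝ} [IsFiniteMeasure μ]
    (hsupp : μ {x | ∃ k : ℤ, x = V + W * k}ᶜ = 0) {s : Set ℝ} {K : Finset ℤ}
    (hK : ∀ k : ℤ, V + W * k ∈ s → k ∈ K) :
    μ.real s ≤ ∑ k ∈ K, μ.real {V + W * k} := by
  calc μ.real s = μ.real (s ∩ {x | ∃ k : ℤ, x = V + W * k}) := by
        rw [measureReal_def, measureReal_def, measure_inter_conull hsupp]
    _ ≤ μ.real (⋃ k ∈ K, {V + W * k}) := by
        refine measureReal_mono ?_ (measure_ne_top _ _)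
        rintro _ ⟨hx, k, rfl⟩
        exact mem_biUnion (hK k hx) rfl
    _ ≤ ∑ k ∈ K, μ.real {V + W * k} := measureReal_biUnion_finset_le _ _

lemma sum_lattice_le_measureReal (hW : W ≠ 0) (μ : Measure ℝ) [IsFiniteMeasure μ] {s : Set ℝ}
    {K : Finset ℤ} (hK : ∀ k ∈ K, V + W * k ∈ s) :
    ∑ k ∈ K, μ.real {V + W * k} ≤ μ.real s := by
  have hinj : InjOn (fun k : ℤ => V + W * k) K := fun k _ l _ h => by simpa [hW] using h
  rw [← Finset.sum_image (f := fun x => μ.real {x}) hinj, sum_measureReal_singleton]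
  exact measureReal_mono (by simpa [subset_def] using hK)

lemma abs_intervalIntegral_sub_latticeSum_le {f : ℝ → ℝ} (hf : Continuous f) (hW : 0 ≤ W)
    {ε : ℝ} {K₀ K₁ : ℤ} (hK : K₀ ≤ K₁)
    (hUC : ∀ x ∈ Icc (V + W * K₀) (V + W * K₁), ∀ y ∈ Icc (V + W * K₀) (V + W * K₁),
      |x - y| ≤ W → |f x - f y| ≤ ε) :
    |(∫ x in (V + W * K₀)..(V + W * K₁), f x) - W * ∑ k ∈ Finset.Ico K₀ K₁, f (V + W * k)|
      ≤ (K₁ - K₀) * (W * ε) := by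
  induction K₁, hK using Int.leInduction with
  | base => simp
  | succ K hK ih =>
    have hnext : V + W * ((K + 1 : ℤ) : ℝ) = V + W * K + W := by push_cast; ring
    have hK₀K : V + W * K₀ ≤ V + W * K := by
      have := mul_le_mul_of_nonneg_left (Int.cast_le.mpr hK : (K₀ : ℝ) ≤ K) hW
      linarith
    rw [hnext] at hUC ⊢
    have hprev := ih fun x hx y hy => hUC x (Icc_subset_Icc_right (by linarith) hx) y
      (Icc_subset_Icc_right (by linarith) hy)
    have hcell := abs_intervalIntegral_sub_mul_le hf hW fun y hy =>
      hUC y ⟨hK₀K.trans hy.1, hy.2⟩ _ ⟨hK₀K, by linarith⟩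
        (abs_le.mpr ⟨by linarith [hy.1], by linarith [hy.2]⟩)
    rw [← intervalIntegral.integral_add_adjacent_intervals (hf.intervalIntegrable _ _)
      (hf.intervalIntegrable _ _), Finset.Ico_add_one_right_eq_Icc, ← Finset.Ico_insert_right hK,
      Finset.sum_insert (by simp)]
    calc _ = |((∫ x in (V + W * K₀)..(V + W * K), f x) - W * ∑ k ∈ Finset.Ico K₀ K, f (V + W * k))
          + ((∫ x in (V + W * K)..(V + W * K + W), f x) - W * f (V + W * K))| := by
          congr 1; ring
      _ ≤ _ := abs_add_le _ _
      _ ≤ _ := by push_cast; linarith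

lemma lattice_strictMono (hW : 0 < W) : StrictMono fun k : ℤ => V + W * k :=
  fun k l hkl => by simpa using mul_lt_mul_of_pos_left (Int.cast_lt.mpr hkl) hW

lemma abs_measureReal_sub_latticeSum_le {μ : Measure ℝ} [IsFiniteMeasure μ]
    (hsupp : μ {x | ∃ k : ℤ, x = V + W * k}ᶜ = 0) (hW : 0 < W) {f : ℝ → ℝ} {ε M : ℝ}
    (hpt : ∀ k : ℤ, |μ.real {V + W * k} - W * f (V + W * k)| ≤ W * ε)
    {K₀ K₁ : ℤ} (hK : K₀ ≤ K₁) (hfK₀ : f (V + W * K₀) ≤ M) (hfK₁ : f (V + W * K₁) ≤ M)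
    {I : Set ℝ} (hI_inner : ∀ k : ℤ, K₀ < k → k < K₁ → V + W * k ∈ I)
    (hI_outer : ∀ k : ℤ, V + W * k ∈ I → k ∈ Finset.Icc K₀ K₁) :
    |μ.real I - W * ∑ k ∈ Finset.Ico K₀ K₁, f (V + W * k)|
      ≤ (K₁ - K₀ + 1) * (W * ε) + W * M := by
  have hupper : μ.real I ≤ ∑ k ∈ Finset.Ico K₀ K₁, μ.real {V + W * k} + μ.real {V + W * K₁} := by
    have := measureReal_le_sum_lattice hsupp hI_outer
    rwa [← Finset.Ico_insert_right hK, Finset.sum_insert (by simp), add_comm] at this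
  have hlower : ∑ k ∈ Finset.Ico K₀ K₁, μ.real {V + W * k} ≤ μ.real I + μ.real {V + W * K₀} := by
    rcases hK.eq_or_lt with rfl | hlt
    · simp only [Finset.Ico_self, Finset.sum_empty]
      positivity
    rw [← Finset.Ioo_insert_left hlt, Finset.sum_insert (by simp), add_comm]
    refine add_le_add_left (sum_lattice_le_measureReal hW.ne' μ fun k hk => ?_) _
    exact hI_inner k (Finset.mem_Ioo.mp hk).1 (Finset.mem_Ioo.mp hk).2
  have hsum : |∑ k ∈ Finset.Ico K₀ K₁, μ.real {V + W * k}
      - W * ∑ k ∈ Finset.Ico K₀ K₁, f (V + W * k)| ≤ (K₁ - K₀) * (W * ε) := by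
    have hcard : ((Finset.Ico K₀ K₁).card : ℝ) = K₁ - K₀ := by
      exact_mod_cast Int.card_Ico_of_le _ _ hK
    rw [Finset.mul_sum, ← Finset.sum_sub_distrib, ← hcard, ← nsmul_eq_mul]
    exact (Finset.abs_sum_le_sum_abs _ _).trans (Finset.sum_le_card_nsmul _ _ _ fun k _ => hpt k)
  have hWM₀ := mul_le_mul_of_nonneg_left hfK₀ hW.le
  have hWM₁ := mul_le_mul_of_nonneg_left hfK₁ hW.le
  rw [abs_le] at hsum ⊢
  constructor <;> linarith [(abs_le.mp (hpt K₀)).2, (abs_le.mp (hpt K₁)).2]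

theorem abs_measureReal_sub_intervalIntegral_le {μ : Measure ℝ} [IsFiniteMeasure μ]
    (hsupp : μ {x | ∃ k : ℤ, x = V + W * k}ᶜ = 0) (hW : 0 < W) {f : ℝ → ℝ} (hf : Continuous f)
    {α β ε M : ℝ} (hWαβ : W ≤ β - α) (hf0 : ∀ x ∈ Icc α β, 0 ≤ f x)
    (hfM : ∀ x ∈ Icc α β, f x ≤ M)
    (hUC : ∀ x ∈ Icc α β, ∀ y ∈ Icc α β, |x - y| ≤ W → |f x - f y| ≤ ε)
    (hpt : ∀ k : ℤ, |μ.real {V + W * k} - W * f (V + W * k)| ≤ W * ε)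
    {I : Set ℝ} (hIoo : Ioo α β ⊆ I) (hIcc : I ⊆ Icc α β) :
    |μ.real I - ∫ x in α..β, f x| ≤ 3 * (β - α) * ε + 3 * W * M := by
  obtain ⟨hαK₀, hK₀α⟩ := lattice_ceil_mem_Ico (V := V) hW α
  obtain ⟨hK₁β, hβK₁⟩ := lattice_floor_mem_Ioc (V := V) hW β
  set K₀ := ⌈(α - V) / W⌉
  set K₁ := ⌊(β - V) / W⌋
  have hK : K₀ ≤ K₁ := (Finset.mem_Icc.mp ((lattice_mem_Icc_iff hW).mp ⟨hαK₀, by linarith⟩)).2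
  have hε : 0 ≤ ε := nonneg_of_mul_nonneg_right ((abs_nonneg _).trans (hpt 0)) hW
  have hlattice := abs_measureReal_sub_latticeSum_le hsupp hW hpt hK
    (hfM _ ⟨hαK₀, by linarith⟩) (hfM _ ⟨by linarith, hβK₁⟩)
    (fun k hk₀ hk₁ => hIoo ⟨hαK₀.trans_lt (lattice_strictMono hW hk₀),
      (lattice_strictMono hW hk₁).trans_le hβK₁⟩)
    fun k hk => (lattice_mem_Icc_iff hW).mp (hIcc hk)
  have hriemann := abs_intervalIntegral_sub_latticeSum_le hf hW.le hK fun x hx y hy =>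
    hUC x (Icc_subset_Icc hαK₀ hβK₁ hx) y (Icc_subset_Icc hαK₀ hβK₁ hy)
  have hsubα : Icc α (V + W * K₀) ⊆ Icc α β := Icc_subset_Icc_right (by linarith)
  have hsubβ : Icc (V + W * K₁) β ⊆ Icc α β := Icc_subset_Icc_left (by linarith)
  obtain ⟨hleft₀, hleft⟩ := intervalIntegral_mem_Icc_of_nonneg_of_le (W := W) hf hαK₀
    (by linarith) (fun x hx => hf0 x (hsubα hx)) fun x hx => hfM x (hsubα hx)
  obtain ⟨hright₀, hright⟩ := intervalIntegral_mem_Icc_of_nonneg_of_le (W := W) hf hβK₁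
    (by linarith) (fun x hx => hf0 x (hsubβ hx)) fun x hx => hfM x (hsubβ hx)
  have hsplit : ∫ x in α..β, f x = (∫ x in α..(V + W * K₀), f x)
      + (∫ x in (V + W * K₀)..(V + W * K₁), f x) + ∫ x in (V + W * K₁)..β, f x := by
    rw [intervalIntegral.integral_add_adjacent_intervals (hf.intervalIntegrable _ _)
      (hf.intervalIntegrable _ _), intervalIntegral.integral_add_adjacent_intervals
      (hf.intervalIntegrable _ _) (hf.intervalIntegrable _ _)]
  have hn : ((K₁ : ℝ) - K₀) * W ≤ β - α := by linarith
  have hnε := mul_le_mul_of_nonneg_right hn hε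
  have hWε := mul_le_mul_of_nonneg_right hWαβ hε
  rw [abs_le] at hlattice hriemann ⊢
  constructor <;> linarith

theorem abs_measureReal_div_setIntegral_sub_one_le {μ : Measure ℝ} [IsFiniteMeasure μ]
    (hsupp : μ {x | ∃ k : ℤ, x = V + W * k}ᶜ = 0) (hW : 0 < W) {f : ℝ → ℝ} (hf : Continuous f)
    {a b c ε M L : ℝ} (hc : 0 < c) (hfc : ∀ x ∈ Icc a b, c ≤ f x)
    (hfM : ∀ x ∈ Icc a b, f x ≤ M)
    (hUC : ∀ x ∈ Icc a b, ∀ y ∈ Icc a b, |x - y| ≤ W → |f x - f y| ≤ ε)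
    (hpt : ∀ k : ℤ, |μ.real {V + W * k} - W * f (V + W * k)| ≤ W * ε)
    (hWL : W ≤ L) {I : Set ℝ} (hIab : I ⊆ Icc a b) (hI : I.OrdConnected)
    (hIvol : ENNReal.ofReal L ≤ volume I) :
    |μ.real I / (∫ x in I, f x) - 1| ≤ 3 * ε / c + 3 * W * M / (c * L) := by
  have hL : 0 < L := hW.trans_le hWL
  obtain ⟨α, β, haα, hβb, hIoo, hIcc⟩ := hI.exists_Ioo_subset_subset_Icc
    (nonempty_of_measure_ne_zero ((ENNReal.ofReal_pos.2 hL).trans_le hIvol).ne') hIab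
  have hI_ae := ae_eq_Ioc_of_Ioo_subset_of_subset_Icc (μ := volume) hIoo hIcc
  have hLD : L ≤ β - α := by
    rw [measure_congr hI_ae, Real.volume_Ioc, ENNReal.ofReal_le_ofReal_iff'] at hIvol
    exact hIvol.resolve_right hL.not_ge
  have hD : 0 < β - α := hL.trans_le hLD
  have hle : α ≤ β := by linarith
  have hαβ : Icc α β ⊆ Icc a b := Icc_subset_Icc haα hβb
  have hint : ∫ x in I, f x = ∫ x in α..β, f x := by
    rw [setIntegral_congr_set hI_ae, intervalIntegral.integral_of_le hle]
  have hJ : c * (β - α) ≤ ∫ x in I, f x := by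
    calc c * (β - α) = ∫ _ in α..β, c := by simp [mul_comm]
      _ ≤ _ := hint ▸ intervalIntegral.integral_mono_on hle intervalIntegrable_const
        (hf.intervalIntegrable _ _) fun x hx => hfc x (hαβ hx)
  have hM : 0 ≤ M :=
    (hc.le.trans (hfc α (hαβ ⟨le_rfl, hle⟩))).trans (hfM α (hαβ ⟨le_rfl, hle⟩))
  have hdiff := abs_measureReal_sub_intervalIntegral_le hsupp hW hf (hWL.trans hLD)
    (fun x hx => hc.le.trans (hfc x (hαβ hx))) (fun x hx => hfM x (hαβ hx))
    (fun x hx y hy => hUC x (hαβ hx) y (hαβ hy)) hpt hIoo hIcc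
  rw [← hint] at hdiff
  calc _ ≤ _ := abs_div_sub_one_le (by positivity) hJ hdiff
    _ = 3 * ε / c + 3 * W * M / (c * (β - α)) := by field_simp
    _ ≤ _ := by gcongr

end Lattice

theorem stmt_7_general (v w : ℕ → ℝ) (hw : ∀ n, 0 < w n) (hw0 : Tendsto w atTop (𝓝 0))
    (μn : ℕ → Measure ℝ) [∀ n, IsProbabilityMeasure (μn n)]
    (hsupp : ∀ n, (μn n) {x : ℝ | ∃ k : ℤ, x = v n + w n * k}ᶜ = 0)
    (f : ℝ → ℝ) (hf_cont : Continuous f)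
    (a b c : ℝ) (hc : 0 < c) (hfc : ∀ x ∈ Set.Icc a b, c ≤ f x)
    (hLLT : ∀ ε > 0, ∃ N : ℕ, ∀ n ≥ N, ∀ k : ℤ,
      |((μn n) {v n + w n * (k : ℝ)}).toReal / w n - f (v n + w n * (k : ℝ))| < ε)
    (m : ℕ → ℝ) (hm : ∀ n, 0 < m n)
    (hmw : Tendsto (fun n => m n / w n) atTop atTop) :
    ∀ ε > 0, ∃ N : ℕ, ∀ n ≥ N, ∀ I : Set ℝ, I ⊆ Set.Icc a b → I.OrdConnected →
      MeasurableSet I → ENNReal.ofReal (m n) ≤ volume I →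
      |((μn n) I).toReal / (∫ x in I, f x) - 1| < ε := by
  intro ε hε
  obtain ⟨M, hM⟩ := (isCompact_Icc (a := a) (b := b)).bddAbove_image hf_cont.continuousOn
  -- With this `ε₁` and `mₙ / wₙ > 6 M / (c ε)`, both terms of the relative bound are `< ε / 2`.
  have hε₁ : 0 < c * ε / 6 := by positivity
  obtain ⟨δ, hδ, hfδ⟩ := Metric.uniformContinuousOn_iff_le.mp
    (isCompact_Icc.uniformContinuousOn_of_continuous hf_cont.continuousOn) _ hε₁
  obtain ⟨N₁, hN₁⟩ := hLLT _ hε₁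
  obtain ⟨N₂, hN₂⟩ := eventually_atTop.mp ((hw0.eventually_lt_const hδ).and
    ((hmw.eventually_ge_atTop 1).and (hmw.eventually_gt_atTop (6 * M / (c * ε)))))
  refine ⟨max N₁ N₂, fun n hn I hIab hI _ hIvol => ?_⟩
  obtain ⟨hwδ, hmw₁, hmwM⟩ := hN₂ n (le_of_max_le_right hn)
  have hwn := hw n
  have hmn := hm n
  have hbound := abs_measureReal_div_setIntegral_sub_one_le (hsupp n) hwn hf_cont hc hfc
    (fun x hx => hM (mem_image_of_mem f hx))
    (fun x hx y hy hxy => hfδ x hx y hy (by rw [Real.dist_eq]; linarith))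
    (fun k => abs_sub_mul_le_of_abs_div_sub_le hwn (hN₁ n (le_of_max_le_left hn) k).le)
    ((one_le_div₀ hwn).mp hmw₁) hIab hI hIvol
  rw [div_lt_div_iff₀ (by positivity) hwn] at hmwM
  have hedge : 3 * w n * M / (c * m n) < ε / 2 := by
    rw [div_lt_iff₀ (by positivity)]
    linarith
  have hbulk : 3 * (c * ε / 6) / c = ε / 2 := by field_simp; ring
  exact hbound.trans_lt (by linarith)

/-- Univariate interval type local limit theorem: if `μₙ` lives on the lattice
`Gₙ = vₙ + wₙℤ`, the local limit theorem holds with continuous density limit `f`,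
`f ≥ c > 0` on `[a,b]`, and the minimal lengths satisfy `mₙ/wₙ → ∞`, then
`μₙ(I)/μ(I) → 1` uniformly over intervals `I ⊆ [a,b]` with `|I| ≥ mₙ`, where `μ = f·λ`. -/
theorem stmt_7 (v w : ℕ → ℝ) (hw : ∀ n, 0 < w n) (hw0 : Tendsto w atTop (𝓝 0))
    (μn : ℕ → Measure ℝ) [∀ n, IsProbabilityMeasure (μn n)]
    (hsupp : ∀ n, (μn n) {x : ℝ | ∃ k : ℤ, x = v n + w n * k}ᶜ = 0)
    (f : ℝ → ℝ) (hf_cont : Continuous f) (hf_nonneg : ∀ x, 0 ≤ f x)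
    (hf_int : Integrable f) (hf_one : ∫ x, f x = 1)
    (a b c : ℝ) (hab : a < b) (hc : 0 < c) (hfc : ∀ x ∈ Set.Icc a b, c ≤ f x)
    (hLLT : ∀ ε > 0, ∃ N : ℕ, ∀ n ≥ N, ∀ k : ℤ,
      |((μn n) {v n + w n * (k : ℝ)}).toReal / w n - f (v n + w n * (k : ℝ))| < ε)
    (m : ℕ → ℝ) (hm : ∀ n, 0 < m n)
    (hmw : Tendsto (fun n => m n / w n) atTop atTop) :
    ∀ ε > 0, ∃ N : ℕ, ∀ n ≥ N, ∀ I : Set ℝ, I ⊆ Set.Icc a b → I.OrdConnected →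
      MeasurableSet I → ENNReal.ofReal (m n) ≤ volume I →
      |((μn n) I).toReal / (∫ x in I, f x) - 1| < ε :=
  stmt_7_general v w hw hw0 μn hsupp f hf_cont a b c hc hfc hLLT m hm hmw
end

section
/- (Sharpness in the univariate case.) In the setting of the univariate interval type local limit theorem, if the sequence (mₙ) of positive minimal lengths does NOT satisfy mₙ/wₙ → ∞ (i.e. there is C ≥ 0 and infinitely many n with mₙ/wₙ ≤ C), and the grid points of Gₙ are eventually dense enough that [a,b] contains at least ⌈C⌉+1 consecutive grid points, then the convergence sup_{I⊆[a,b], |I|≥mₙ} |μₙ(I)/μ(I) − 1| → 0 fails: there exist β < 1 and intervals Iₙ ⊆ [a,b] with |Iₙ| ≥ mₙ and μₙ(Iₙ)/μ(Iₙ) ≤ β along a subsequence. -/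
/-!
Let `N = ⌈C⌉` and let `I` be the open interval between the grid points `v + w k` and
`v + w (k + N)`. Its length `N w` is at least `m` whenever `m / w ≤ C`, yet it contains only the
`N - 1` interior grid points. By the local limit theorem and uniform continuity of `f` each of them
carries mass about `w f(v + w k)`, so `μₙ(I) ≈ (N - 1) w f` while `∫_I f ≈ N w f`; once all errors
are below `c / (8N)` the ratio stays below `1 - 1 / (2N)`.
-/

open MeasureTheory Filter Topology Set

section Grid

variable {v w : ℝ}

lemma exists_mem_Ico_of_grid_mem_Ioo (hw : 0 < w) {k k' : ℤ} {N : ℕ}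
    (h : v + w * k' ∈ Ioo (v + w * k) (v + w * (k + N))) :
    ∃ j ∈ Finset.Ico 1 N, v + w * k' = v + w * (k + j) := by
  have hk : (k : ℝ) < k' := lt_of_mul_lt_mul_left (by linarith [h.1]) hw.le
  have hkN : (k' : ℝ) < k + N := lt_of_mul_lt_mul_left (by linarith [h.2]) hw.le
  norm_cast at hk hkN
  obtain ⟨j, hj⟩ := Int.eq_ofNat_of_zero_le (sub_nonneg.2 hk.le)
  refine ⟨j, Finset.mem_Ico.2 ⟨by omega, by omega⟩, ?_⟩
  rw [show k' = k + j by omega]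
  push_cast
  ring

lemma measure_Ioo_le_sum_grid {μ : Measure ℝ} (hw : 0 < w)
    (hsupp : μ {x : ℝ | ∃ k : ℤ, x = v + w * k}ᶜ = 0) (k : ℤ) (N : ℕ) :
    μ (Ioo (v + w * k) (v + w * (k + N))) ≤ ∑ j ∈ Finset.Ico 1 N, μ {v + w * (k + j)} := by
  have hsub : Ioo (v + w * k) (v + w * (k + N)) ⊆
      {x : ℝ | ∃ k : ℤ, x = v + w * k}ᶜ ∪ ⋃ j ∈ Finset.Ico 1 N, {v + w * (k + j)} := by
    intro x hx
    by_cases hG : ∃ k' : ℤ, x = v + w * k'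
    · obtain ⟨k', rfl⟩ := hG
      obtain ⟨j, hj, hx'⟩ := exists_mem_Ico_of_grid_mem_Ioo hw hx
      exact Or.inr (mem_biUnion hj hx')
    · exact Or.inl hG
  calc _ ≤ _ := measure_mono hsub
    _ ≤ _ := measure_union_le _ _
    _ ≤ 0 + ∑ j ∈ Finset.Ico 1 N, μ {v + w * (k + j)} :=
      add_le_add hsupp.le (measure_biUnion_finset_le _ _)
    _ = _ := zero_add _

lemma toReal_measure_Ioo_le_of_grid {μ : Measure ℝ} [IsFiniteMeasure μ] (hw : 0 < w)
    (hsupp : μ {x : ℝ | ∃ k : ℤ, x = v + w * k}ᶜ = 0) (k : ℤ) {N : ℕ} (hN : 1 ≤ N) {M : ℝ}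
    (hM : ∀ j ∈ Finset.Ico 1 N, (μ {v + w * (k + j)}).toReal ≤ M) :
    (μ (Ioo (v + w * k) (v + w * (k + N)))).toReal ≤ (N - 1) * M :=
  calc _ ≤ (∑ j ∈ Finset.Ico 1 N, μ {v + w * (k + j)}).toReal :=
        ENNReal.toReal_mono (ENNReal.sum_ne_top.2 fun _ _ => measure_ne_top _ _)
          (measure_Ioo_le_sum_grid hw hsupp k N)
    _ = ∑ j ∈ Finset.Ico 1 N, (μ {v + w * (k + j)}).toReal :=
        ENNReal.toReal_sum fun _ _ => measure_ne_top _ _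
    _ ≤ (Finset.Ico 1 N).card • M := Finset.sum_le_card_nsmul _ _ _ hM
    _ = (N - 1) * M := by rw [Nat.card_Ico, nsmul_eq_mul, Nat.cast_sub hN, Nat.cast_one]

end Grid

lemma div_le_one_sub_one_div_two_mul_of_le {N : ℕ} (hN : 1 ≤ N) {s F d x y : ℝ} (hs : 0 ≤ s)
    (hd : 0 ≤ d) (hF : 8 * N * d ≤ F) (hx : x ≤ (N - 1) * (s * (F + 2 * d)))
    (hy : N * s * (F - d) ≤ y) :
    x / y ≤ 1 - 1 / (2 * N) := by
  have hN' : (1 : ℝ) ≤ N := by exact_mod_cast hN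
  have hβ : 0 ≤ 1 - 1 / (2 * (N : ℝ)) := by
    rw [sub_nonneg, div_le_one (by positivity)]; linarith
  have hdF : d ≤ F := by nlinarith
  refine div_le_of_le_mul₀ ((by positivity : 0 ≤ N * s * (F - d)).trans hy) hβ ?_
  calc x ≤ (N - 1) * (s * (F + 2 * d)) := hx
    -- the difference is `s (F / 2 - (3N - 5/2) d)`, and `3N d ≤ 3F / 8`
    _ ≤ s * ((N - 1 / 2) * (F - d)) := by nlinarith
    _ = (1 - 1 / (2 * N)) * (N * s * (F - d)) := by field_simp
    _ ≤ _ := mul_le_mul_of_nonneg_left hy hβ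

lemma abs_sub_left_le_of_dist_le {f : ℝ → ℝ} {s : Set ℝ} {δ d : ℝ}
    (hf : ∀ x ∈ s, ∀ y ∈ s, dist x y ≤ δ → dist (f x) (f y) ≤ d) {p q : ℝ}
    (hsub : Icc p q ⊆ s) (hpq : q - p ≤ δ) :
    ∀ x ∈ Icc p q, |f x - f p| ≤ d := by
  intro x hx
  have hp : p ∈ Icc p q := ⟨le_rfl, hx.1.trans hx.2⟩
  refine hf x (hsub hx) p (hsub hp) ?_
  rw [Real.dist_eq, abs_of_nonneg (sub_nonneg.2 hx.1)]
  linarith [hx.2]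

theorem toReal_measure_Ioo_div_setIntegral_le {μ : Measure ℝ} [IsFiniteMeasure μ] {v w : ℝ}
    (hw : 0 < w) (hsupp : μ {x : ℝ | ∃ k : ℤ, x = v + w * k}ᶜ = 0) {f : ℝ → ℝ} (k : ℤ)
    {N : ℕ} (hN : 1 ≤ N) {d : ℝ} (hd : 0 ≤ d)
    (hf : ContinuousOn f (Icc (v + w * k) (v + w * (k + N))))
    (hosc : ∀ x ∈ Icc (v + w * k) (v + w * (k + N)), |f x - f (v + w * k)| ≤ d)
    (hF : 8 * N * d ≤ f (v + w * k))
    (hllt : ∀ j ∈ Finset.Ico 1 N, (μ {v + w * (k + j)}).toReal / w < f (v + w * (k + j)) + d) :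
    (μ (Ioo (v + w * k) (v + w * (k + N)))).toReal /
      ∫ x in Ioo (v + w * k) (v + w * (k + N)), f x ≤ 1 - 1 / (2 * N) := by
  have hlen : v + w * (k + N) - (v + w * k) = N * w := by ring
  refine div_le_one_sub_one_div_two_mul_of_le hN hw.le hd hF
    (toReal_measure_Ioo_le_of_grid hw hsupp k hN fun j hj => ?_) ?_
  · have hjN : (j : ℝ) ≤ N := by exact_mod_cast (Finset.mem_Ico.1 hj).2.le
    have hmem : v + w * (k + j) ∈ Icc (v + w * k) (v + w * (k + N)) :=
      ⟨by nlinarith [j.cast_nonneg (α := ℝ)], by nlinarith⟩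
    have hmass := (div_lt_iff₀ hw).1 (hllt j hj)
    have hnear := (abs_le.1 (hosc _ hmem)).2
    nlinarith
  · have hpq : v + w * k ≤ v + w * (k + N) := by nlinarith [N.cast_nonneg (α := ℝ)]
    calc N * w * (f (v + w * k) - d)
        = (f (v + w * k) - d) * volume.real (Ioo (v + w * k) (v + w * (k + N))) := by
          rw [Real.volume_real_Ioo_of_le hpq, hlen]; ring
      _ ≤ _ := setIntegral_ge_of_const_le_real measurableSet_Ioo measure_Ioo_lt_top.ne
          (fun x hx => by linarith [(abs_le.1 (hosc x (Ioo_subset_Icc_self hx))).1])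
          (hf.integrableOn_Icc.mono_set Ioo_subset_Icc_self)

theorem stmt_8_general (v w : ℕ → ℝ) (hw : ∀ n, 0 < w n) (hw0 : Tendsto w atTop (𝓝 0))
    (μn : ℕ → Measure ℝ) [∀ n, IsProbabilityMeasure (μn n)]
    (hsupp : ∀ n, (μn n) {x : ℝ | ∃ k : ℤ, x = v n + w n * k}ᶜ = 0)
    (f : ℝ → ℝ) (hf_cont : Continuous f)
    (a b c : ℝ) (hc : 0 < c) (hfc : ∀ x ∈ Set.Icc a b, c ≤ f x)
    (hLLT : ∀ ε > 0, ∃ N : ℕ, ∀ n ≥ N, ∀ k : ℤ,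
      |((μn n) {v n + w n * (k : ℝ)}).toReal / w n - f (v n + w n * (k : ℝ))| < ε)
    (m : ℕ → ℝ) (hm : ∀ n, 0 < m n)
    (C : ℝ) (hfreq : ∃ᶠ n in atTop, m n / w n ≤ C)
    (hdense : ∀ᶠ n in atTop, ∃ k : ℤ, ∀ j : ℕ, j ≤ ⌈C⌉₊ →
      v n + w n * ((k : ℝ) + j) ∈ Set.Icc a b) :
    ∃ β : ℝ, β < 1 ∧ ∃ᶠ n in atTop, ∃ I : Set ℝ, I ⊆ Set.Icc a b ∧ I.OrdConnected ∧
      MeasurableSet I ∧ ENNReal.ofReal (m n) ≤ volume I ∧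
      ((μn n) I).toReal / (∫ x in I, f x) ≤ β := by
  have hCpos : 0 < C := by
    obtain ⟨n, hn⟩ := hfreq.exists
    exact (div_pos (hm n) (hw n)).trans_le hn
  have hN : 1 ≤ ⌈C⌉₊ := Nat.one_le_ceil_iff.2 hCpos
  set N := ⌈C⌉₊
  have hd : 0 < c / (8 * N) := by positivity
  obtain ⟨δ, hδ, hosc⟩ := Metric.uniformContinuousOn_iff_le.1
    (isCompact_Icc.uniformContinuousOn_of_continuous hf_cont.continuousOn) _ hd
  obtain ⟨N₀, hN₀⟩ := hLLT _ hd
  have hwδ : ∀ᶠ n in atTop, w n * N ≤ δ := by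
    filter_upwards [hw0.eventually_lt_const (by positivity : 0 < δ / N)] with n hn
    exact (lt_div_iff₀ (by positivity)).1 hn |>.le
  refine ⟨1 - 1 / (2 * N), sub_lt_self _ (by positivity), ?_⟩
  refine (hfreq.and_eventually (hdense.and (hwδ.and (eventually_ge_atTop N₀)))).mono ?_
  rintro n ⟨hmn, ⟨k, hk⟩, hwδn, hn⟩
  have hsub : Icc (v n + w n * k) (v n + w n * (k + N)) ⊆ Icc a b :=
    Icc_subset_Icc (by simpa using (hk 0 (Nat.zero_le _)).1) (hk N le_rfl).2
  have hlen : v n + w n * (k + N) - (v n + w n * k) = N * w n := by ring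
  refine ⟨_, Ioo_subset_Icc_self.trans hsub, ordConnected_Ioo, measurableSet_Ioo, ?_,
    toReal_measure_Ioo_div_setIntegral_le (hw n) (hsupp n) k hN hd.le hf_cont.continuousOn
      (abs_sub_left_le_of_dist_le hosc hsub (by linarith)) ?_ fun j _ => ?_⟩
  · rw [Real.volume_Ioo, hlen]
    refine ENNReal.ofReal_le_ofReal ((div_le_iff₀ (hw n)).1 hmn |>.trans ?_)
    exact mul_le_mul_of_nonneg_right (Nat.le_ceil C) (hw n).le
  · rw [mul_div_cancel₀ _ (by positivity)]
    exact hfc _ (by simpa using hk 0 (Nat.zero_le _))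
  · have := abs_lt.1 (hN₀ n hn (k + j))
    push_cast at this
    linarith

/-- Sharpness in the univariate case: if `mₙ/wₙ` does not tend to infinity, i.e. there
are `C ≥ 0` and infinitely many `n` with `mₙ/wₙ ≤ C`, and `[a,b]` eventually contains
`⌈C⌉+1` consecutive grid points of `Gₙ`, then the interval type local limit theorem fails:
there are `β < 1` and intervals `Iₙ ⊆ [a,b]` with `|Iₙ| ≥ mₙ` and `μₙ(Iₙ)/μ(Iₙ) ≤ β`
along a subsequence. -/
theorem stmt_8 (v w : ℕ → ℝ) (hw : ∀ n, 0 < w n) (hw0 : Tendsto w atTop (𝓝 0))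
    (μn : ℕ → Measure ℝ) [∀ n, IsProbabilityMeasure (μn n)]
    (hsupp : ∀ n, (μn n) {x : ℝ | ∃ k : ℤ, x = v n + w n * k}ᶜ = 0)
    (f : ℝ → ℝ) (hf_cont : Continuous f) (hf_nonneg : ∀ x, 0 ≤ f x)
    (hf_int : Integrable f) (hf_one : ∫ x, f x = 1)
    (a b c : ℝ) (hab : a < b) (hc : 0 < c) (hfc : ∀ x ∈ Set.Icc a b, c ≤ f x)
    (hLLT : ∀ ε > 0, ∃ N : ℕ, ∀ n ≥ N, ∀ k : ℤ,
      |((μn n) {v n + w n * (k : ℝ)}).toReal / w n - f (v n + w n * (k : ℝ))| < ε)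
    (m : ℕ → ℝ) (hm : ∀ n, 0 < m n)
    (C : ℝ) (hC : 0 ≤ C) (hfreq : ∃ᶠ n in atTop, m n / w n ≤ C)
    (hdense : ∀ᶠ n in atTop, ∃ k : ℤ, ∀ j : ℕ, j ≤ ⌈C⌉₊ →
      v n + w n * ((k : ℝ) + j) ∈ Set.Icc a b) :
    ∃ β : ℝ, β < 1 ∧ ∃ᶠ n in atTop, ∃ I : Set ℝ, I ⊆ Set.Icc a b ∧ I.OrdConnected ∧
      MeasurableSet I ∧ ENNReal.ofReal (m n) ≤ volume I ∧
      ((μn n) I).toReal / (∫ x in I, f x) ≤ β :=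
  stmt_8_general v w hw hw0 μn hsupp f hf_cont a b c hc hfc hLLT m hm C hfreq hdense
end

section
/- (Multivariate interval type local limit theorem.) Let μₙ be probability measures on grids 𝒢ₙ = vₙ + wₙ∘ℤ^d in ℝ^d with widths wₙ ∈ ℝ^d_{>0}, wₙ → 0 componentwise, satisfying sup_{x∈𝒢ₙ} |μₙ({x})/w̄ₙ − f(x)| → 0 where w̄ₙ = ∏_δ w_{ₙ,δ} and f is a continuous probability density on ℝ^d. Let [a,b] be a non-degenerate compact d-dimensional interval on which f ≥ c > 0, and let mₙ ∈ ℝ^d_{>0} satisfy m_{ₙ,δ}/w_{ₙ,δ} → ∞ for each coordinate δ. Then sup over all d-dimensional intervals I ⊆ [a,b] with |I| ≥ mₙ componentwise of |μₙ(I)/μ(I) − 1| → 0, where μ = f·λ^d. -/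
/-!
Cut `ℝ^d` into the half-open cells of the grid `vₙ + wₙ∘ℤ^d`; each has volume `w̄ₙ` and contains
exactly one grid point. By the local limit hypothesis and the uniform continuity of `f` near
`[a, b]`, the mass `μₙ {x}` of a grid point and the integral of `f` over its cell differ by
`o(w̄ₙ)`, uniformly over the grid points. An interval `I` is squeezed between the cells inside it
and the cells meeting it; as its sides are `≫ wₙ`, both families have total volume
`(1 + o(1)) λ(I)`, so `|μₙ(I) - μ(I)| = o(λ(I))`, while `μ(I) ≥ c λ(I)`.
-/

open MeasureTheory Filter Topology Set

section Scaling

variable {v w y r : ℝ}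

lemma div_sub_lt_iff (hw : 0 < w) : (y - v) / w < r ↔ y < v + w * r := by
  rw [div_lt_iff₀ hw, mul_comm]; constructor <;> intro h <;> linarith

lemma le_div_sub_iff (hw : 0 < w) : r ≤ (y - v) / w ↔ v + w * r ≤ y := by
  rw [le_div_iff₀ hw, mul_comm]; constructor <;> intro h <;> linarith

lemma lt_div_sub_iff (hw : 0 < w) : r < (y - v) / w ↔ v + w * r < y := by
  rw [lt_div_iff₀ hw, mul_comm]; constructor <;> intro h <;> linarith

lemma mul_sub_div_sub_div (hw : 0 < w) (α β : ℝ) :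
    w * ((β - v) / w - (α - v) / w) = β - α := by
  field_simp [hw.ne']; ring

end Scaling

section Counting

lemma natCast_card_Icc (a b : ℤ) : ((Finset.Icc a b).card : ℝ) = max (b + 1 - a : ℝ) 0 := by
  rw [Int.card_Icc]
  exact_mod_cast Int.toNat_eq_max _

lemma card_Icc_floor_le {s e : ℝ} (h : s ≤ e) : ((Finset.Icc ⌊s⌋ ⌊e⌋).card : ℝ) ≤ e - s + 2 := by
  rw [natCast_card_Icc]
  exact max_le (by linarith [Int.floor_le e, Int.lt_floor_add_one s]) (by linarith)

lemma sub_two_le_card_Icc_ceil (s e : ℝ) :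
    e - s - 2 ≤ ((Finset.Icc (⌊s⌋ + 1) (⌈e⌉ - 2)).card : ℝ) := by
  rw [natCast_card_Icc]
  push_cast
  exact le_max_of_le_left (by linarith [Int.le_ceil e, Int.floor_le s])

end Counting

lemma abs_sub_le_of_sum_bounds {κ : Type*} [DecidableEq κ] {I J : Finset κ} (hIJ : I ⊆ J)
    {a b : κ → ℝ} {X Y e M : ℝ}
    (hXJ : X ≤ ∑ k ∈ J, a k) (hXI : ∑ k ∈ I, a k ≤ X)
    (hYJ : Y ≤ ∑ k ∈ J, b k) (hYI : ∑ k ∈ I, b k ≤ Y)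
    (hab : ∀ k ∈ J, |a k - b k| ≤ e) (hbM : ∀ k ∈ J, b k ≤ M) :
    |X - Y| ≤ J.card * e + (J.card - I.card) * M := by
  have hsplit : ∑ k ∈ J, b k = ∑ k ∈ J \ I, b k + ∑ k ∈ I, b k := (Finset.sum_sdiff hIJ).symm
  have hdiff : ∑ k ∈ J \ I, b k ≤ (J.card - I.card) * M := by
    rw [← Nat.cast_sub (Finset.card_le_card hIJ), ← Finset.card_sdiff_of_subset hIJ,
      ← nsmul_eq_mul]
    exact Finset.sum_le_card_nsmul _ _ _ fun k hk => hbM k (Finset.sdiff_subset hk)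
  have hsumJ : ∑ k ∈ J, |a k - b k| ≤ J.card * e := by
    rw [← nsmul_eq_mul]; exact Finset.sum_le_card_nsmul _ _ _ hab
  have hJ : |∑ k ∈ J, a k - ∑ k ∈ J, b k| ≤ J.card * e := by
    rw [← Finset.sum_sub_distrib]; exact (Finset.abs_sum_le_sum_abs _ _).trans hsumJ
  have hI : |∑ k ∈ I, a k - ∑ k ∈ I, b k| ≤ J.card * e := by
    rw [← Finset.sum_sub_distrib]
    exact (Finset.abs_sum_le_sum_abs _ _).trans <| hsumJ.trans' <|
      Finset.sum_le_sum_of_subset_of_nonneg hIJ fun _ _ _ => abs_nonneg _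
  rw [abs_le] at hJ hI ⊢
  constructor <;> linarith [hI.1, hJ.2]

lemma abs_div_sub_one_lt {X Y V g c ε : ℝ} (hV : 0 < V) (hc : 0 < c) (hXY : |X - Y| ≤ V * g)
    (hY : c * V ≤ Y) (hg : g < c * ε) : |X / Y - 1| < ε := by
  have hY₀ : 0 < Y := (mul_pos hc hV).trans_le hY
  rw [div_sub_one hY₀.ne', abs_div, abs_of_pos hY₀, div_lt_iff₀ hY₀]
  have hg₀ : 0 ≤ g := nonneg_of_mul_nonneg_right ((abs_nonneg _).trans hXY) hV
  have hε : 0 < ε := pos_of_mul_pos_right (hg₀.trans_lt hg) hc.le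
  calc |X - Y| ≤ V * g := hXY
    _ < V * (c * ε) := mul_lt_mul_of_pos_left hg hV
    _ ≤ ε * Y := by nlinarith

/-- `(1 ± 2t)^d` bound the total volume of the grid cells meeting, resp. lying inside, a box whose
sides are at least `w / t`, relative to the volume of the box. -/
def gridErrorBound (d : ℕ) (t η M : ℝ) : ℝ :=
  (1 + 2 * t) ^ d * η + M * ((1 + 2 * t) ^ d - (1 - 2 * t) ^ d)

lemma exists_pos_gridErrorBound_lt (d : ℕ) (M : ℝ) {η r : ℝ} (h : η < r) :
    ∃ t : ℝ, 0 < t ∧ t ≤ 1 / 2 ∧ gridErrorBound d t η M < r := by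
  have hcont : Tendsto (fun t => gridErrorBound d t η M) (𝓝[>] 0) (𝓝 η) := by
    have : Continuous fun t => gridErrorBound d t η M := by unfold gridErrorBound; fun_prop
    simpa [gridErrorBound] using (this.tendsto 0).mono_left nhdsWithin_le_nhds
  obtain ⟨t, hlt, ht⟩ := ((hcont.eventually (gt_mem_nhds h)).and
    (Ioo_mem_nhdsGT (by norm_num : (0 : ℝ) < 1 / 2))).exists
  exact ⟨t, ht.1, ht.2.le, hlt⟩

section Atoms

variable {X κ : Type*} [MeasurableSpace X] {μ : Measure X} [IsFiniteMeasure μ] {g : κ → X}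

lemma measureReal_le_sum_of_compl_range_null (hg : μ (range g)ᶜ = 0) {s : Set X}
    {K : Finset κ} (hK : ∀ k, g k ∈ s → k ∈ K) :
    μ.real s ≤ ∑ k ∈ K, μ.real {g k} := by
  have hsub : s ∩ range g ⊆ ⋃ k ∈ K, {g k} := by
    rintro _ ⟨hx, k, rfl⟩
    exact mem_biUnion (hK k hx) rfl
  calc μ.real s = μ.real (s ∩ range g) := by simp only [measureReal_def, measure_inter_conull hg]
    _ ≤ μ.real (⋃ k ∈ K, {g k}) := measureReal_mono hsub (measure_ne_top μ _)
    _ ≤ ∑ k ∈ K, μ.real {g k} := measureReal_biUnion_finset_le _ _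

lemma sum_measureReal_le_of_injective [MeasurableSingletonClass X] (hg : g.Injective)
    {s : Set X} {K : Finset κ} (hK : ∀ k ∈ K, g k ∈ s) :
    ∑ k ∈ K, μ.real {g k} ≤ μ.real s := by
  rw [← measureReal_biUnion_finset (fun k _ l _ hkl => disjoint_singleton.2 (hg.ne hkl))
    (fun _ _ => measurableSet_singleton _) fun _ _ => measure_ne_top μ _]
  exact measureReal_mono (iUnion₂_subset fun k hk => singleton_subset_iff.2 (hK k hk))
    (measure_ne_top μ _)

end Atoms

section Integral

variable {X κ : Type*} [MeasurableSpace X] {μ : Measure X} {f : X → ℝ} {C : κ → Set X}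
  {K : Finset κ}

lemma setIntegral_le_sum_of_subset_biUnion (hf : 0 ≤ f) (hfi : Integrable f μ)
    (hC : ∀ k, MeasurableSet (C k)) (hdisj : (K : Set κ).PairwiseDisjoint C) {s : Set X}
    (hs : s ⊆ ⋃ k ∈ K, C k) :
    ∫ x in s, f x ∂μ ≤ ∑ k ∈ K, ∫ x in C k, f x ∂μ := by
  rw [← integral_biUnion_finset K (fun k _ => hC k) hdisj fun _ _ => hfi.integrableOn]
  exact setIntegral_mono_set hfi.integrableOn (Eventually.of_forall hf) hs.eventuallyLE

lemma sum_setIntegral_le_of_biUnion_subset (hf : 0 ≤ f) (hfi : Integrable f μ)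
    (hC : ∀ k, MeasurableSet (C k)) (hdisj : (K : Set κ).PairwiseDisjoint C) {s : Set X}
    (hs : ∀ k ∈ K, C k ⊆ s) :
    ∑ k ∈ K, ∫ x in C k, f x ∂μ ≤ ∫ x in s, f x ∂μ := by
  rw [← integral_biUnion_finset K (fun k _ => hC k) hdisj fun _ _ => hfi.integrableOn]
  exact setIntegral_mono_set hfi.integrableOn (Eventually.of_forall hf)
    (iUnion₂_subset hs).eventuallyLE

lemma abs_setIntegral_sub_mul_le {s : Set X} (hs : μ s < ⊤) (hfi : IntegrableOn f s μ) {y η : ℝ}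
    (h : ∀ x ∈ s, |f x - y| ≤ η) :
    |∫ x in s, f x ∂μ - μ.real s * y| ≤ μ.real s * η := by
  have := norm_setIntegral_le_of_norm_le_const hs (f := fun x => f x - y) h
  rwa [integral_sub hfi (integrableOn_const hs.ne), setIntegral_const, smul_eq_mul, mul_comm η,
    Real.norm_eq_abs] at this

end Integral

lemma Set.OrdConnected.Ioo_csInf_csSup_subset {S : Set ℝ} (hS : S.OrdConnected)
    (hne : S.Nonempty) (hb : BddBelow S) (ha : BddAbove S) : Ioo (sInf S) (sSup S) ⊆ S :=
  IsConnected.Ioo_csInf_csSup_subset ⟨hne, isPreconnected_iff_ordConnected.2 hS⟩ hb ha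

lemma volume_eq_ofReal_of_Ioo_subset_of_subset_Icc {S : Set ℝ} {α β : ℝ} (hIoo : Ioo α β ⊆ S)
    (hIcc : S ⊆ Icc α β) : volume S = ENNReal.ofReal (β - α) :=
  le_antisymm (Real.volume_Icc ▸ measure_mono hIcc) (Real.volume_Ioo ▸ measure_mono hIoo)

section Grid

variable {ι : Type*} (v w : ι → ℝ)

def gridPoint (k : ι → ℤ) : ι → ℝ := fun i => v i + w i * k i

noncomputable def gridIndex (x : ι → ℝ) : ι → ℤ := fun i => ⌊(x i - v i) / w i⌋

def gridCell (k : ι → ℤ) : Set (ι → ℝ) := gridIndex v w ⁻¹' {k}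

variable {v w}

lemma range_gridPoint :
    range (gridPoint v w) = {x | ∃ k : ι → ℤ, ∀ i, x i = v i + w i * k i} := by
  ext x
  simp [gridPoint, funext_iff, eq_comm]

lemma gridCell_eq_pi (hw : ∀ i, 0 < w i) (k : ι → ℤ) :
    gridCell v w k = univ.pi fun i => Ico (gridPoint v w k i) (gridPoint v w k i + w i) := by
  ext x
  simp only [gridCell, gridIndex, mem_preimage, mem_singleton_iff, funext_iff, Int.floor_eq_iff,
    mem_univ_pi, mem_Ico, gridPoint, le_div_sub_iff (hw _)]
  refine forall_congr' fun i => and_congr_right' ?_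
  rw [div_lt_iff₀ (hw i)]
  constructor <;> intro h <;> linarith

lemma gridIndex_gridPoint (hw : ∀ i, 0 < w i) (k : ι → ℤ) :
    gridIndex v w (gridPoint v w k) = k := by
  funext i
  simp [gridIndex, gridPoint, mul_div_cancel_left₀ _ (hw i).ne']

lemma gridPoint_injective (hw : ∀ i, 0 < w i) : (gridPoint v w).Injective :=
  Function.LeftInverse.injective (gridIndex_gridPoint hw)

lemma gridPoint_mem_gridCell (hw : ∀ i, 0 < w i) (k : ι → ℤ) :
    gridPoint v w k ∈ gridCell v w k :=
  gridIndex_gridPoint hw k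

lemma abs_sub_gridPoint_le_of_mem_gridCell (hw : ∀ i, 0 < w i) {k : ι → ℤ} {x : ι → ℝ}
    (hx : x ∈ gridCell v w k) (i : ι) : |x i - gridPoint v w k i| ≤ w i := by
  have hxi := (gridCell_eq_pi hw k ▸ hx) i (mem_univ i)
  rw [abs_le]
  constructor <;> linarith [hxi.1, hxi.2, hw i]

lemma measurableSet_gridCell [Countable ι] (hw : ∀ i, 0 < w i) (k : ι → ℤ) :
    MeasurableSet (gridCell v w k) := by
  rw [gridCell_eq_pi hw]
  exact MeasurableSet.univ_pi fun _ => measurableSet_Ico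

lemma volume_gridCell [Fintype ι] (hw : ∀ i, 0 < w i) (k : ι → ℤ) :
    volume (gridCell v w k) = ∏ i, ENNReal.ofReal (w i) := by
  simp [gridCell_eq_pi hw, volume_pi_pi, Real.volume_Ico]

lemma volume_gridCell_lt_top [Fintype ι] (hw : ∀ i, 0 < w i) (k : ι → ℤ) :
    volume (gridCell v w k) < ⊤ := by
  simp [volume_gridCell hw, ENNReal.prod_lt_top]

lemma measureReal_gridCell [Fintype ι] (hw : ∀ i, 0 < w i) (k : ι → ℤ) :
    volume.real (gridCell v w k) = ∏ i, w i := by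
  simp [measureReal_def, volume_gridCell hw, ENNReal.toReal_prod, (hw _).le]

variable [Fintype ι] [DecidableEq ι]

variable (v w) in
/-- Indices of the cells meeting `Icc α β`; `innerIndices` indexes cells inside `Ioo α β` that
cover it up to a boundary layer of width `w`. -/
noncomputable def outerIndices (α β : ι → ℝ) : Finset (ι → ℤ) :=
  Fintype.piFinset fun i => Finset.Icc ⌊(α i - v i) / w i⌋ ⌊(β i - v i) / w i⌋

variable (v w) in
noncomputable def innerIndices (α β : ι → ℝ) : Finset (ι → ℤ) :=
  Fintype.piFinset fun i => Finset.Icc (⌊(α i - v i) / w i⌋ + 1) (⌈(β i - v i) / w i⌉ - 2)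

variable {α β : ι → ℝ}

lemma innerIndices_subset_outerIndices : innerIndices v w α β ⊆ outerIndices v w α β :=
  Fintype.piFinset_subset _ _ fun i => Finset.Icc_subset_Icc (by omega) <| by
    linarith [Int.ceil_le_floor_add_one ((β i - v i) / w i)]

lemma gridIndex_mem_outerIndices (hw : ∀ i, 0 < w i) {x : ι → ℝ} (hx : x ∈ Icc α β) :
    gridIndex v w x ∈ outerIndices v w α β :=
  Fintype.mem_piFinset.2 fun i => Finset.mem_Icc.2
    ⟨Int.floor_mono (by gcongr; exacts [(hw i).le, hx.1 i]),
      Int.floor_mono (by gcongr; exacts [(hw i).le, hx.2 i])⟩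

lemma gridCell_subset_Icc (hw : ∀ i, 0 < w i) {k : ι → ℤ} (hk : k ∈ outerIndices v w α β) :
    gridCell v w k ⊆ Icc (α - w) (β + w) := by
  intro x hx
  rw [gridCell_eq_pi hw] at hx
  have hk' := fun i => Finset.mem_Icc.1 (Fintype.mem_piFinset.1 hk i)
  simp only [Int.floor_le_iff, Int.le_floor, div_sub_lt_iff (hw _), le_div_sub_iff (hw _)] at hk'
  have hx' := fun i => hx i (mem_univ i)
  simp only [gridPoint, mem_Ico] at hx'
  constructor <;> intro i <;> simp only [Pi.sub_apply, Pi.add_apply] <;>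
    linarith [hk' i, hx' i]

lemma gridCell_subset_pi_Ioo (hw : ∀ i, 0 < w i) {k : ι → ℤ} (hk : k ∈ innerIndices v w α β) :
    gridCell v w k ⊆ univ.pi fun i => Ioo (α i) (β i) := by
  intro x hx i _
  rw [gridCell_eq_pi hw] at hx
  have hki := Finset.mem_Icc.1 (Fintype.mem_piFinset.1 hk i)
  have hα := (div_sub_lt_iff (hw i)).1 (Int.floor_lt.1 (by omega : ⌊(α i - v i) / w i⌋ < k i))
  have hβ := (lt_div_sub_iff (hw i)).1 (Int.lt_ceil.1 (by omega : k i + 1 < ⌈(β i - v i) / w i⌉))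
  have hxi := hx i (mem_univ i)
  simp only [gridPoint, mem_Ico] at hxi
  push_cast at hβ
  constructor <;> linarith

lemma prod_mul_card_outerIndices_le (hw : ∀ i, 0 < w i) {t : ℝ} (ht₀ : 0 ≤ t)
    (hwt : ∀ i, w i ≤ t * (β i - α i)) :
    (∏ i, w i) * (outerIndices v w α β).card ≤
      (∏ i, (β i - α i)) * (1 + 2 * t) ^ Fintype.card ι := by
  rw [outerIndices, Fintype.card_piFinset, Nat.cast_prod, ← Finset.prod_mul_distrib,
    ← Finset.card_univ, ← Finset.prod_const, ← Finset.prod_mul_distrib]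
  refine Finset.prod_le_prod (fun i _ => mul_nonneg (hw i).le (Nat.cast_nonneg _)) fun i _ => ?_
  have hL := pos_of_mul_pos_right ((hw i).trans_le (hwt i)) ht₀
  have := mul_le_mul_of_nonneg_left (card_Icc_floor_le (div_le_div_of_nonneg_right
    (sub_le_sub_right (sub_pos.1 hL).le (v i)) (hw i).le)) (hw i).le
  nlinarith [mul_sub_div_sub_div (v := v i) (hw i) (α i) (β i), hwt i]

lemma prod_mul_le_prod_mul_card_innerIndices (hw : ∀ i, 0 < w i) {t : ℝ} (ht₀ : 0 ≤ t)
    (ht : t ≤ 1 / 2) (hwt : ∀ i, w i ≤ t * (β i - α i)) :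
    (∏ i, (β i - α i)) * (1 - 2 * t) ^ Fintype.card ι ≤
      (∏ i, w i) * (innerIndices v w α β).card := by
  rw [innerIndices, Fintype.card_piFinset, Nat.cast_prod, ← Finset.prod_mul_distrib,
    ← Finset.card_univ, ← Finset.prod_const, ← Finset.prod_mul_distrib]
  refine Finset.prod_le_prod (fun i _ => mul_nonneg
    (pos_of_mul_pos_right ((hw i).trans_le (hwt i)) ht₀).le (by linarith)) fun i _ => ?_
  have := mul_le_mul_of_nonneg_left
    (sub_two_le_card_Icc_ceil ((α i - v i) / w i) ((β i - v i) / w i)) (hw i).le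
  nlinarith [mul_sub_div_sub_div (v := v i) (hw i) (α i) (β i), hwt i]

end Grid

section LocalLimit

variable {ι : Type*} [Fintype ι] {v w α β : ι → ℝ} {μ : Measure (ι → ℝ)} {f : (ι → ℝ) → ℝ}

lemma abs_measureReal_singleton_sub_setIntegral_gridCell_le (hw : ∀ i, 0 < w i)
    (hfi : Integrable f) {k : ι → ℤ} {η₁ η₂ : ℝ}
    (hlocal : |μ.real {gridPoint v w k} / (∏ i, w i) - f (gridPoint v w k)| ≤ η₁)
    (hosc : ∀ x ∈ gridCell v w k, |f x - f (gridPoint v w k)| ≤ η₂) :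
    |μ.real {gridPoint v w k} - ∫ x in gridCell v w k, f x| ≤ (∏ i, w i) * (η₁ + η₂) := by
  have hW : 0 < ∏ i, w i := Finset.prod_pos fun i _ => hw i
  have hpoint : |μ.real {gridPoint v w k} - (∏ i, w i) * f (gridPoint v w k)| ≤
      (∏ i, w i) * η₁ := by
    rw [← mul_div_cancel₀ (μ.real {gridPoint v w k}) hW.ne', ← mul_sub, abs_mul, abs_of_pos hW]
    exact mul_le_mul_of_nonneg_left hlocal hW.le
  have hcell := abs_setIntegral_sub_mul_le (volume_gridCell_lt_top hw k) hfi.integrableOn hosc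
  rw [measureReal_gridCell hw, abs_sub_comm] at hcell
  rw [mul_add]
  exact (abs_sub_le _ _ _).trans (add_le_add hpoint hcell)

lemma setIntegral_gridCell_le (hw : ∀ i, 0 < w i) (hf : 0 ≤ f) {k : ι → ℤ} {M : ℝ}
    (hM : ∀ x ∈ gridCell v w k, f x ≤ M) :
    ∫ x in gridCell v w k, f x ≤ (∏ i, w i) * M := by
  have := norm_setIntegral_le_of_norm_le_const (volume_gridCell_lt_top hw k)
    fun x hx => (Real.norm_of_nonneg (hf x)).trans_le (hM x hx)
  rw [measureReal_gridCell hw, mul_comm] at this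
  exact (le_abs_self _).trans this

variable [DecidableEq ι] [IsFiniteMeasure μ]

theorem abs_measureReal_pi_sub_setIntegral_le (hw : ∀ i, 0 < w i)
    (hμ : μ (range (gridPoint v w))ᶜ = 0) (hf : 0 ≤ f) (hfi : Integrable f)
    {S : ι → Set ℝ} (hIoo : ∀ i, Ioo (α i) (β i) ⊆ S i) (hIcc : ∀ i, S i ⊆ Icc (α i) (β i))
    {t : ℝ} (ht₀ : 0 ≤ t) (ht : t ≤ 1 / 2) (hwt : ∀ i, w i ≤ t * (β i - α i)) {η₁ η₂ M : ℝ}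
    (hlocal : ∀ k, |μ.real {gridPoint v w k} / (∏ i, w i) - f (gridPoint v w k)| ≤ η₁)
    (hosc : ∀ x ∈ Icc (α - w) (β + w), ∀ y ∈ Icc (α - w) (β + w), (∀ i, |x i - y i| ≤ w i) →
      |f x - f y| ≤ η₂)
    (hM : ∀ x ∈ Icc (α - w) (β + w), f x ≤ M) :
    |μ.real (univ.pi S) - ∫ x in univ.pi S, f x| ≤
      (∏ i, (β i - α i)) * gridErrorBound (Fintype.card ι) t (η₁ + η₂) M := by
  set J := outerIndices v w α β
  set I := innerIndices v w α β
  have hSIcc : univ.pi S ⊆ Icc α β := fun x hx =>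
    ⟨fun i => (hIcc i (hx i (mem_univ i))).1, fun i => (hIcc i (hx i (mem_univ i))).2⟩
  have hJ : ∀ k ∈ J, gridCell v w k ⊆ Icc (α - w) (β + w) := fun k hk => gridCell_subset_Icc hw hk
  have hI : ∀ k ∈ I, gridCell v w k ⊆ univ.pi S := fun k hk =>
    (gridCell_subset_pi_Ioo hw hk).trans (pi_mono fun i _ => hIoo i)
  have hdisj : ∀ K : Finset (ι → ℤ), (K : Set (ι → ℤ)).PairwiseDisjoint (gridCell v w) :=
    fun _ => pairwiseDisjoint_fiber _ _
  have hbound := abs_sub_le_of_sum_bounds innerIndices_subset_outerIndices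
    (a := fun k => μ.real {gridPoint v w k}) (b := fun k => ∫ x in gridCell v w k, f x)
    (measureReal_le_sum_of_compl_range_null hμ fun k hk => by
      simpa only [gridIndex_gridPoint hw] using gridIndex_mem_outerIndices (v := v) hw (hSIcc hk))
    (sum_measureReal_le_of_injective (gridPoint_injective hw) fun k hk =>
      hI k hk (gridPoint_mem_gridCell hw k))
    (setIntegral_le_sum_of_subset_biUnion hf hfi (measurableSet_gridCell hw) (hdisj J)
      fun x hx => mem_biUnion (gridIndex_mem_outerIndices hw (hSIcc hx)) rfl)
    (sum_setIntegral_le_of_biUnion_subset hf hfi (measurableSet_gridCell hw) (hdisj I) hI)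
    (fun k hk => abs_measureReal_singleton_sub_setIntegral_gridCell_le hw hfi (hlocal k)
      fun x hx => hosc x (hJ k hk hx) _ (hJ k hk (gridPoint_mem_gridCell hw k))
        (abs_sub_gridPoint_le_of_mem_gridCell hw hx))
    fun k hk => setIntegral_gridCell_le hw hf fun x hx => hM x (hJ k hk hx)
  have hbox : α - w ∈ Icc (α - w) (β + w) := ⟨le_rfl, fun i => by
    have := pos_of_mul_pos_right ((hw i).trans_le (hwt i)) ht₀
    simp only [Pi.sub_apply, Pi.add_apply]
    linarith [hw i]⟩
  have hη : 0 ≤ η₁ + η₂ := add_nonneg ((abs_nonneg _).trans (hlocal 0))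
    ((abs_nonneg _).trans (hosc _ hbox _ hbox fun i => by simp [(hw i).le]))
  have hJcard := prod_mul_card_outerIndices_le (v := v) hw ht₀ hwt
  have hIcard := prod_mul_le_prod_mul_card_innerIndices (v := v) hw ht₀ ht hwt
  calc _ ≤ _ := hbound
    _ = (∏ i, w i) * J.card * (η₁ + η₂) + ((∏ i, w i) * J.card - (∏ i, w i) * I.card) * M := by
        ring
    _ ≤ _ := by
        unfold gridErrorBound
        linear_combination mul_le_mul_of_nonneg_right hJcard hη +
          mul_le_mul_of_nonneg_right (sub_le_sub hJcard hIcard) ((hf _).trans (hM _ hbox))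

theorem abs_measureReal_pi_div_setIntegral_sub_one_lt (hw : ∀ i, 0 < w i) (hw₁ : ∀ i, w i ≤ 1)
    (hμ : μ (range (gridPoint v w))ᶜ = 0) (hf : 0 ≤ f) (hfi : Integrable f)
    {a b : ι → ℝ} {c : ℝ} (hc : 0 < c) (hfc : ∀ x ∈ Icc a b, c ≤ f x)
    {m : ι → ℝ} (hm : ∀ i, 0 < m i) {S : ι → Set ℝ} (hSab : ∀ i, S i ⊆ Icc (a i) (b i))
    (hSoc : ∀ i, (S i).OrdConnected) (hSvol : ∀ i, ENNReal.ofReal (m i) ≤ volume (S i))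
    {t : ℝ} (ht₀ : 0 ≤ t) (ht : t ≤ 1 / 2) (hwt : ∀ i, w i ≤ t * m i) {η₁ η₂ M ε : ℝ}
    (hlocal : ∀ k, |μ.real {gridPoint v w k} / (∏ i, w i) - f (gridPoint v w k)| ≤ η₁)
    (hosc : ∀ x ∈ Icc (a - 1) (b + 1), ∀ y ∈ Icc (a - 1) (b + 1), (∀ i, |x i - y i| ≤ w i) →
      |f x - f y| ≤ η₂)
    (hM : ∀ x ∈ Icc (a - 1) (b + 1), f x ≤ M)
    (hε : gridErrorBound (Fintype.card ι) t (η₁ + η₂) M < c * ε) :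
    |μ.real (univ.pi S) / (∫ x in univ.pi S, f x) - 1| < ε := by
  have hne : ∀ i, (S i).Nonempty := fun i => nonempty_of_measure_ne_zero
    ((ENNReal.ofReal_pos.2 (hm i)).trans_le (hSvol i)).ne'
  have hbdd : ∀ i, BddBelow (S i) ∧ BddAbove (S i) := fun i =>
    ⟨⟨a i, fun _ hx => (hSab i hx).1⟩, ⟨b i, fun _ hx => (hSab i hx).2⟩⟩
  set α : ι → ℝ := fun i => sInf (S i)
  set β : ι → ℝ := fun i => sSup (S i)
  have hIoo : ∀ i, Ioo (α i) (β i) ⊆ S i := fun i =>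
    (hSoc i).Ioo_csInf_csSup_subset (hne i) (hbdd i).1 (hbdd i).2
  have hIcc : ∀ i, S i ⊆ Icc (α i) (β i) := fun i => subset_Icc_csInf_csSup (hbdd i).1 (hbdd i).2
  have hvol := fun i => volume_eq_ofReal_of_Ioo_subset_of_subset_Icc (hIoo i) (hIcc i)
  have hmL : ∀ i, m i ≤ β i - α i := fun i => (ENNReal.ofReal_le_ofReal_iff
    (sub_nonneg.2 (csInf_le_csSup (hne i) (hbdd i).1 (hbdd i).2))).1 (hvol i ▸ hSvol i)
  have hthick : Icc (α - w) (β + w) ⊆ Icc (a - 1) (b + 1) := fun x hx =>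
    ⟨fun i => by
      have := hx.1 i
      simp only [Pi.sub_apply, Pi.one_apply] at this ⊢
      linarith [le_csInf (hne i) fun _ hx => (hSab i hx).1, hw₁ i],
    fun i => by
      have := hx.2 i
      simp only [Pi.add_apply, Pi.one_apply] at this ⊢
      linarith [csSup_le (hne i) fun _ hx => (hSab i hx).2, hw₁ i]⟩
  have hest := abs_measureReal_pi_sub_setIntegral_le hw hμ hf hfi hIoo hIcc
    ht₀ ht (fun i => (hwt i).trans (mul_le_mul_of_nonneg_left (hmL i) ht₀)) hlocal
    (fun x hx y hy => hosc x (hthick hx) y (hthick hy)) fun x hx => hM x (hthick hx)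
  have hpi : volume (univ.pi S) = ∏ i, ENNReal.ofReal (β i - α i) := by
    rw [volume_pi_pi]; exact Finset.prod_congr rfl fun i _ => hvol i
  have hlow := setIntegral_ge_of_const_le_real
    (MeasurableSet.univ_pi fun i => (hSoc i).measurableSet) (by simp [hpi, ENNReal.prod_ne_top])
    (fun x hx => hfc x ⟨fun i => (hSab i (hx i (mem_univ i))).1,
      fun i => (hSab i (hx i (mem_univ i))).2⟩) hfi.integrableOn
  rw [measureReal_def, hpi, ENNReal.toReal_prod, Finset.prod_congr rfl
    fun i _ => ENNReal.toReal_ofReal ((hm i).le.trans (hmL i))] at hlow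
  exact abs_div_sub_one_lt (Finset.prod_pos fun i _ => (hm i).trans_le (hmL i)) hc hest hlow hε

end LocalLimit

theorem stmt_9_general (d : ℕ)
    (v w : ℕ → Fin d → ℝ) (hw : ∀ n δ, 0 < w n δ)
    (hw0 : ∀ δ, Tendsto (fun n => w n δ) atTop (𝓝 0))
    (μn : ℕ → Measure (Fin d → ℝ)) [∀ n, IsProbabilityMeasure (μn n)]
    (hsupp : ∀ n, (μn n) {x : Fin d → ℝ | ∃ k : Fin d → ℤ, ∀ δ, x δ = v n δ + w n δ * k δ}ᶜ = 0)
    (f : (Fin d → ℝ) → ℝ) (hf_cont : Continuous f) (hf_nonneg : ∀ x, 0 ≤ f x)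
    (hf_int : Integrable f)
    (a b : Fin d → ℝ)
    (c : ℝ) (hc : 0 < c) (hfc : ∀ x ∈ Set.Icc a b, c ≤ f x)
    (hLLT : ∀ ε > 0, ∃ N : ℕ, ∀ n ≥ N, ∀ k : Fin d → ℤ,
      |((μn n) {fun δ => v n δ + w n δ * (k δ : ℝ)}).toReal / (∏ δ, w n δ) -
        f (fun δ => v n δ + w n δ * (k δ : ℝ))| < ε)
    (m : ℕ → Fin d → ℝ) (hm : ∀ n δ, 0 < m n δ)
    (hmw : ∀ δ, Tendsto (fun n => m n δ / w n δ) atTop atTop) :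
    ∀ ε > 0, ∃ N : ℕ, ∀ n ≥ N, ∀ S : Fin d → Set ℝ,
      (∀ δ, S δ ⊆ Set.Icc (a δ) (b δ)) → (∀ δ, (S δ).OrdConnected) →
      (∀ δ, MeasurableSet (S δ)) → (∀ δ, ENNReal.ofReal (m n δ) ≤ volume (S δ)) →
      |((μn n) (Set.univ.pi S)).toReal / (∫ x in Set.univ.pi S, f x) - 1| < ε := by
  intro ε hε
  obtain ⟨M, hM⟩ := (isCompact_Icc (a := a - 1) (b := b + 1)).bddAbove_image hf_cont.continuousOn
  obtain ⟨δ₀, hδ₀, hunif⟩ := Metric.uniformContinuousOn_iff_le.1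
    (isCompact_Icc.uniformContinuousOn_of_continuous hf_cont.continuousOn) (c * ε / 4)
    (by positivity)
  obtain ⟨t, ht₀, ht, hgt⟩ := exists_pos_gridErrorBound_lt (Fintype.card (Fin d)) M
    (show c * ε / 4 + c * ε / 4 < c * ε by linarith [mul_pos hc hε])
  obtain ⟨N₁, hN₁⟩ := hLLT (c * ε / 4) (by positivity)
  obtain ⟨N₂, hN₂⟩ := eventually_atTop.1 (eventually_all.2 fun δ =>
    ((hw0 δ).eventually (ge_mem_nhds (lt_min one_pos hδ₀))).and ((hmw δ).eventually_ge_atTop t⁻¹))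
  refine ⟨max N₁ N₂, fun n hn S hSab hSoc _ hSvol => ?_⟩
  have hwn := hN₂ n (le_of_max_le_right hn)
  refine abs_measureReal_pi_div_setIntegral_sub_one_lt (hw n)
    (fun δ => (hwn δ).1.trans (min_le_left _ _)) (by rw [range_gridPoint]; exact hsupp n)
    hf_nonneg hf_int hc hfc (hm n) hSab hSoc hSvol ht₀.le ht (fun δ => ?_)
    (fun k => (hN₁ n (le_of_max_le_left hn) k).le) (fun x hx y hy hxy => ?_)
    (fun x hx => hM (mem_image_of_mem f hx)) hgt
  · rw [← inv_mul_le_iff₀ ht₀, ← le_div_iff₀ (hw n δ)]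
    exact (hwn δ).2
  · refine hunif x hx y hy ((dist_pi_le_iff hδ₀.le).2 fun δ => ?_)
    rw [Real.dist_eq]
    exact (hxy δ).trans ((hwn δ).1.trans (min_le_right _ _))

/-- Multivariate interval type local limit theorem: if `μₙ` lives on the grid
`𝒢ₙ = vₙ + wₙ∘ℤ^d` with widths `wₙ → 0`, the local limit theorem
`sup_{x∈𝒢ₙ} |μₙ({x})/w̄ₙ − f(x)| → 0` holds with `f` a continuous probability density,
`f ≥ c > 0` on a non-degenerate compact interval `[a,b]`, and `m_{n,δ}/w_{n,δ} → ∞` in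
each coordinate, then `μₙ(I)/μ(I) → 1` uniformly over `d`-dimensional intervals
`I ⊆ [a,b]` with `|I| ≥ mₙ` componentwise, where `μ = f·λ^d`. -/
theorem stmt_9 (d : ℕ) (hd : 0 < d)
    (v w : ℕ → Fin d → ℝ) (hw : ∀ n δ, 0 < w n δ)
    (hw0 : ∀ δ, Tendsto (fun n => w n δ) atTop (𝓝 0))
    (μn : ℕ → Measure (Fin d → ℝ)) [∀ n, IsProbabilityMeasure (μn n)]
    (hsupp : ∀ n, (μn n) {x : Fin d → ℝ | ∃ k : Fin d → ℤ, ∀ δ, x δ = v n δ + w n δ * k δ}ᶜ = 0)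
    (f : (Fin d → ℝ) → ℝ) (hf_cont : Continuous f) (hf_nonneg : ∀ x, 0 ≤ f x)
    (hf_int : Integrable f) (hf_one : ∫ x, f x = 1)
    (a b : Fin d → ℝ) (hab : ∀ δ, a δ < b δ)
    (c : ℝ) (hc : 0 < c) (hfc : ∀ x ∈ Set.Icc a b, c ≤ f x)
    (hLLT : ∀ ε > 0, ∃ N : ℕ, ∀ n ≥ N, ∀ k : Fin d → ℤ,
      |((μn n) {fun δ => v n δ + w n δ * (k δ : ℝ)}).toReal / (∏ δ, w n δ) -
        f (fun δ => v n δ + w n δ * (k δ : ℝ))| < ε)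
    (m : ℕ → Fin d → ℝ) (hm : ∀ n δ, 0 < m n δ)
    (hmw : ∀ δ, Tendsto (fun n => m n δ / w n δ) atTop atTop) :
    ∀ ε > 0, ∃ N : ℕ, ∀ n ≥ N, ∀ S : Fin d → Set ℝ,
      (∀ δ, S δ ⊆ Set.Icc (a δ) (b δ)) → (∀ δ, (S δ).OrdConnected) →
      (∀ δ, MeasurableSet (S δ)) → (∀ δ, ENNReal.ofReal (m n δ) ≤ volume (S δ)) →
      |((μn n) (Set.univ.pi S)).toReal / (∫ x in Set.univ.pi S, f x) - 1| < ε :=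
  stmt_9_general d v w hw hw0 μn hsupp f hf_cont hf_nonneg hf_int a b c hc hfc hLLT m hm hmw
end
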